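/- arXiv:2008.02762 — 13 statements merged into one kernel-verified Lean document; each statement's English description precedes it below -/
import Mathlib

section
/- If u is a binary word in the Ulam set U({0,1}) of the free monoid on {0,1}, then the reverse of u is also in U({0,1}). -/
/-- `U` is the Ulam set `U({0,1})` of nonempty binary words: it contains the two
length-one words `0` and `1`, and a word of length at least `2` is in `U` iff it has
exactly one representation as the concatenation of two distinct words of `U`. -/
def IsUlamFamily (U : Set (List Bool)) : Prop :=
  ∀ u : List Bool, u ∈ U ↔
    (u = [false] ∨ u = [true] ∨
      (2 ≤ u.length ∧ ∃! p : List Bool × List Bool,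
        p.1 ∈ U ∧ p.2 ∈ U ∧ p.1 ≠ p.2 ∧ p.1 ++ p.2 = u))

lemma ulam_nil_notMem {U : Set (List Bool)} (hU : IsUlamFamily U) :
    ([] : List Bool) ∉ U := by
  intro h
  rcases (hU []).1 h with h | h | h
  · exact absurd h (by simp)
  · exact absurd h (by simp)
  · exact absurd h.1 (by simp)

lemma eu_map {α β : Type*} (e : α ≃ β) {P : α → Prop} {Q : β → Prop}
    (h : ∀ a, P a ↔ Q (e a)) : (∃! a, P a) ↔ (∃! b, Q b) := by
  constructor
  · rintro ⟨a, ha, hua⟩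
    refine ⟨e a, (h a).1 ha, fun b hb => ?_⟩
    have : e.symm b = a := hua _ ((h _).2 (by simpa using hb))
    have := congrArg e this
    simpa using this
  · rintro ⟨b, hb, hub⟩
    refine ⟨e.symm b, (h _).2 (by simpa using hb), fun a ha => ?_⟩
    have : e a = b := hub _ ((h a).1 ha)
    simp [← this]

lemma ulam_unique {U V : Set (List Bool)} (hU : IsUlamFamily U) (hV : IsUlamFamily V) :
    U = V := by
  have key : ∀ n (u : List Bool), u.length ≤ n → (u ∈ U ↔ u ∈ V) := by
    intro n
    induction n with
    | zero =>
      intro u hu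
      have : u = [] := List.length_eq_zero_iff.mp (Nat.le_zero.mp hu)
      subst this
      exact ⟨fun h => absurd h (ulam_nil_notMem hU),
             fun h => absurd h (ulam_nil_notMem hV)⟩
    | succ n ih =>
      intro u hlen
      rw [hU u, hV u]
      refine or_congr Iff.rfl (or_congr Iff.rfl (and_congr Iff.rfl (existsUnique_congr ?_)))
      intro p
      constructor
      · rintro ⟨h1, h2, h3, h4⟩
        have e1 : p.1 ≠ [] := fun h => ulam_nil_notMem hU (h ▸ h1)
        have e2 : p.2 ≠ [] := fun h => ulam_nil_notMem hU (h ▸ h2)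
        have hl : p.1.length + p.2.length = u.length := by
          simpa using congrArg List.length h4
        have l1 : p.1.length ≤ n := by
          have := List.length_pos_iff.mpr e2; omega
        have l2 : p.2.length ≤ n := by
          have := List.length_pos_iff.mpr e1; omega
        exact ⟨(ih p.1 l1).1 h1, (ih p.2 l2).1 h2, h3, h4⟩
      · rintro ⟨h1, h2, h3, h4⟩
        have e1 : p.1 ≠ [] := fun h => ulam_nil_notMem hV (h ▸ h1)
        have e2 : p.2 ≠ [] := fun h => ulam_nil_notMem hV (h ▸ h2)
        have hl : p.1.length + p.2.length = u.length := by
          simpa using congrArg List.length h4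
        have l1 : p.1.length ≤ n := by
          have := List.length_pos_iff.mpr e2; omega
        have l2 : p.2.length ≤ n := by
          have := List.length_pos_iff.mpr e1; omega
        exact ⟨(ih p.1 l1).2 h1, (ih p.2 l2).2 h2, h3, h4⟩
  ext u
  exact key u.length u le_rfl

def revSwap : (List Bool × List Bool) ≃ (List Bool × List Bool) where
  toFun p := (p.2.reverse, p.1.reverse)
  invFun p := (p.2.reverse, p.1.reverse)
  left_inv p := by simp
  right_inv p := by simp

lemma ulam_reverse_family {U : Set (List Bool)} (hU : IsUlamFamily U) :
    IsUlamFamily {u : List Bool | u.reverse ∈ U} := by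
  intro u
  simp only [Set.mem_setOf_eq]
  rw [hU u.reverse]
  refine or_congr ?_ (or_congr ?_ (and_congr ?_ ?_))
  · constructor
    · intro h; have := congrArg List.reverse h; simpa using this
    · intro h; simp [h]
  · constructor
    · intro h; have := congrArg List.reverse h; simpa using this
    · intro h; simp [h]
  · simp
  · refine (eu_map revSwap ?_).symm
    intro q
    show (q.1.reverse ∈ U ∧ q.2.reverse ∈ U ∧ q.1 ≠ q.2 ∧ q.1 ++ q.2 = u) ↔
      (q.2.reverse ∈ U ∧ q.1.reverse ∈ U ∧ q.2.reverse ≠ q.1.reverse ∧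
        q.2.reverse ++ q.1.reverse = u.reverse)
    have hne : q.2.reverse ≠ q.1.reverse ↔ q.1 ≠ q.2 := by
      constructor
      · intro h h'; exact h (h' ▸ rfl)
      · intro h h'
        apply h
        have := congrArg List.reverse h'
        simpa using this.symm
    have happ : q.2.reverse ++ q.1.reverse = u.reverse ↔ q.1 ++ q.2 = u := by
      rw [← List.reverse_append, List.reverse_inj]
    rw [hne, happ]
    tauto

theorem ulam_reverse (U : Set (List Bool)) (hU : IsUlamFamily U)
    (u : List Bool) (hu : u ∈ U) : u.reverse ∈ U := by
  have h := ulam_unique (ulam_reverse_family hU) hU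
  rw [← h] at hu
  exact hu
end

section
/- If u is a binary word in the Ulam set U({0,1}), then the bitwise complement of u (swapping all 0's and 1's) is also in U({0,1}). -/
theorem ulam_complement (U : Set (List Bool)) (hU : IsUlamFamily U)
    (u : List Bool) (hu : u ∈ U) : u.map (fun b => !b) ∈ U := by
  have hcc : ∀ v : List Bool, (v.map (fun b => !b)).map (fun b => !b) = v := by
    intro v; induction v with
    | nil => rfl
    | cons a t ih => simp [ih]
  have hempty : [] ∉ U := by
    intro h
    rcases (hU []).mp h with h | h | ⟨h2, -⟩
    · simp at h
    · simp at h
    · simp at h2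
  have key : ∀ n, ∀ u : List Bool, u.length ≤ n → u ∈ U → u.map (fun b => !b) ∈ U := by
    intro n
    induction n with
    | zero =>
      intro u hl hu
      have : u = [] := List.length_eq_zero_iff.mp (Nat.le_zero.mp hl)
      exact absurd (this ▸ hu) hempty
    | succ n ih =>
      intro u hl hu
      rcases (hU u).mp hu with rfl | rfl | ⟨h2, p, ⟨hp1, hp2, hne, hcat⟩, huniq⟩
      · exact (hU [true]).mpr (Or.inr (Or.inl rfl))
      · exact (hU [false]).mpr (Or.inl rfl)
      · have hlen : p.1.length + p.2.length = u.length := by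
          rw [← hcat]; simp
        have hp1ne : p.1 ≠ [] := fun h => hempty (h ▸ hp1)
        have hp2ne : p.2 ≠ [] := fun h => hempty (h ▸ hp2)
        have hl1 : p.1.length ≤ n := by
          have := List.length_pos_iff.mpr hp2ne; omega
        have hl2 : p.2.length ≤ n := by
          have := List.length_pos_iff.mpr hp1ne; omega
        apply (hU _).mpr
        refine Or.inr (Or.inr ⟨by simpa using h2,
          (p.1.map (fun b => !b), p.2.map (fun b => !b)),
          ⟨ih _ hl1 hp1, ih _ hl2 hp2, ?_, by rw [← List.map_append, hcat]⟩, ?_⟩)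
        · intro h
          apply hne
          have := congrArg (List.map (fun b => !b)) h
          simpa [hcc] using this
        · rintro ⟨q1, q2⟩ ⟨hq1, hq2, hqne, hqcat⟩
          have hq1ne : q1 ≠ [] := fun h => hempty (h ▸ hq1)
          have hq2ne : q2 ≠ [] := fun h => hempty (h ▸ hq2)
          have hqlen : q1.length + q2.length = u.length := by
            have := congrArg List.length hqcat
            simpa using this
          have hql1 : q1.length ≤ n := by
            have := List.length_pos_iff.mpr hq2ne; omega
          have hql2 : q2.length ≤ n := by
            have := List.length_pos_iff.mpr hq1ne; omega
          have hdecomp : (q1.map (fun b => !b), q2.map (fun b => !b)) = p := by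
            apply huniq
            refine ⟨ih _ hql1 hq1, ih _ hql2 hq2, ?_, ?_⟩
            · intro h
              apply hqne
              have := congrArg (List.map (fun b => !b)) h
              simpa [hcc] using this
            · have := congrArg (List.map (fun b => !b)) hqcat
              simpa [hcc] using this
          have h1 : q1 = p.1.map (fun b => !b) := by
            have := congrArg (fun x : List Bool × List Bool => x.1.map (fun b => !b)) hdecomp
            simpa [hcc] using this
          have h2' : q2 = p.2.map (fun b => !b) := by
            have := congrArg (fun x : List Bool × List Bool => x.2.map (fun b => !b)) hdecomp
            simpa [hcc] using this
          simp [h1, h2']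
  exact key u.length u le_rfl hu
end

section
/- Let u be a binary word of length n with exactly one letter equal to 1, located at position i (1-indexed). Then u is in the Ulam set U({0,1}) if and only if the binomial coefficient C(n-1, i-1) is odd. -/
namespace UlamProofAux

variable {U : Set (List Bool)}

/-- The word `0^a 1 0^b`. -/
def w (a b : ℕ) : List Bool :=
  List.replicate a false ++ true :: List.replicate b false

lemma w_length (a b : ℕ) : (w a b).length = a + b + 1 := by
  simp [w]; omega

lemma true_mem_w (a b : ℕ) : true ∈ w a b := by simp [w]

lemma w_ne_false (a b : ℕ) : w a b ≠ [false] := by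
  intro h
  have := true_mem_w a b
  rw [h] at this; simp at this

lemma w_succ_left (a b : ℕ) : w (a + 1) b = false :: w a b := by
  simp [w, List.replicate_succ]

lemma w_succ_right (a b : ℕ) : w a (b + 1) = w a b ++ [false] := by
  simp [w, List.replicate_succ']

lemma count_true_w (a b : ℕ) : (w a b).count true = 1 := by
  simp [w, List.count_replicate]

lemma mem_ne_nil (hU : IsUlamFamily U) {v : List Bool} (hv : v ∈ U) : v ≠ [] := by
  rcases (hU v).1 hv with h | h | ⟨h2, -⟩
  · simp [h]
  · simp [h]
  · intro he; subst he; simp at h2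

lemma eq_single_false (hU : IsUlamFamily U) :
    ∀ m : ℕ, ∀ v : List Bool, v.length = m → v ∈ U → (∀ x ∈ v, x = false) → v = [false] := by
  intro m
  induction m using Nat.strong_induction_on with
  | _ m ih =>
    intro v hlen hv hall
    rcases (hU v).1 hv with h | h | ⟨h2, ⟨p, ⟨hp1, hp2, hne, happ⟩, -⟩⟩
    · exact h
    · exfalso
      subst h
      simpa using hall true (by simp)
    · exfalso
      have n1 : p.1 ≠ [] := mem_ne_nil hU hp1
      have n2 : p.2 ≠ [] := mem_ne_nil hU hp2
      have a1 : ∀ x ∈ p.1, x = false := fun x hx => hall x (by rw [← happ]; simp [hx])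
      have a2 : ∀ x ∈ p.2, x = false := fun x hx => hall x (by rw [← happ]; simp [hx])
      have hlen2 : p.1.length + p.2.length = m := by
        rw [← hlen, ← happ]; simp
      have l1 : p.1.length < m := by
        have := List.length_pos_iff.2 n2; omega
      have l2 : p.2.length < m := by
        have := List.length_pos_iff.2 n1; omega
      have e1 := ih _ l1 p.1 rfl hp1 a1
      have e2 := ih _ l2 p.2 rfl hp2 a2
      exact hne (e1.trans e2.symm)

lemma all_false_of_count {l : List Bool} (h : l.count true = 0) : ∀ x ∈ l, x = false := by
  intro x hx
  cases x
  · rfl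
  · exact absurd hx (List.count_eq_zero.1 h)

lemma false_mem (hU : IsUlamFamily U) : [false] ∈ U := (hU _).2 (Or.inl rfl)

lemma split_w (hU : IsUlamFamily U) {a b : ℕ} {p q : List Bool}
    (hp : p ∈ U) (hq : q ∈ U) (h : p ++ q = w a b) :
    (p = [false] ∧ ∃ a', a = a' + 1 ∧ q = w a' b) ∨
    (q = [false] ∧ ∃ b', b = b' + 1 ∧ p = w a b') := by
  have hcount : p.count true + q.count true = 1 := by
    have := congrArg (List.count true) h
    simpa [count_true_w] using this
  rcases Nat.eq_zero_or_pos (p.count true) with h0 | h0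
  · left
    have hp1 : p = [false] :=
      eq_single_false hU p.length p rfl hp (all_false_of_count h0)
    subst hp1
    refine ⟨rfl, ?_⟩
    cases a with
    | zero =>
      exfalso
      simp [w] at h
    | succ a' =>
      rw [w_succ_left] at h
      exact ⟨a', rfl, by simpa using h⟩
  · have hq0 : q.count true = 0 := by omega
    right
    have hq1 : q = [false] :=
      eq_single_false hU q.length q rfl hq (all_false_of_count hq0)
    subst hq1
    refine ⟨rfl, ?_⟩
    cases b with
    | zero =>
      exfalso
      have hw : w a 0 = List.replicate a false ++ [true] := by simp [w]
      rw [hw] at h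
      have := (List.append_inj' h rfl).2
      simp at this
    | succ b' =>
      rw [w_succ_right] at h
      exact ⟨b', rfl, (List.append_inj' h rfl).1⟩

lemma w_mem_iff (hU : IsUlamFamily U) :
    ∀ n a b : ℕ, a + b = n → (w a b ∈ U ↔ Odd (n.choose a)) := by
  intro n
  induction n using Nat.strong_induction_on with
  | _ n ih =>
    intro a b hab
    cases n with
    | zero =>
      have ha : a = 0 := by omega
      have hb : b = 0 := by omega
      subst ha; subst hb
      have : w 0 0 = [true] := by simp [w]
      rw [this]
      simp only [Nat.choose_self]
      exact iff_of_true ((hU _).2 (Or.inr (Or.inl rfl))) (by decide)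
    | succ m =>
      -- key characterization of membership
      have hmem : w a b ∈ U ↔
          (((0 < a ∧ w (a - 1) b ∈ U) ∧ ¬(0 < b ∧ w a (b - 1) ∈ U)) ∨
           ((0 < b ∧ w a (b - 1) ∈ U) ∧ ¬(0 < a ∧ w (a - 1) b ∈ U))) := by
        constructor
        · intro hmem
          rcases (hU _).1 hmem with h | h | ⟨-, ⟨p, ⟨hp1, hp2, hne, happ⟩, huniq⟩⟩
          · exact absurd (congrArg List.length h) (by simp [w_length]; omega)
          · exact absurd (congrArg List.length h) (by simp [w_length]; omega)
          · rcases split_w hU hp1 hp2 happ with ⟨hp1e, a', rfl, hp2e⟩ | ⟨hp2e, b', rfl, hp1e⟩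
            · left
              refine ⟨⟨Nat.succ_pos _, by simpa using hp2e ▸ hp2⟩, ?_⟩
              rintro ⟨hbpos, hR⟩
              obtain ⟨b', rfl⟩ : ∃ b', b = b' + 1 := ⟨b - 1, by omega⟩
              have hc2 : (w (a' + 1) b', [false]).1 ∈ U ∧ (w (a' + 1) b', [false]).2 ∈ U ∧
                  (w (a' + 1) b', [false]).1 ≠ (w (a' + 1) b', [false]).2 ∧
                  (w (a' + 1) b', [false]).1 ++ (w (a' + 1) b', [false]).2 = w (a' + 1) (b' + 1) :=
                ⟨by simpa using hR, false_mem hU, w_ne_false _ _, (w_succ_right _ _).symm⟩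
              have heq := huniq _ hc2
              have : w (a' + 1) b' = [false] := by
                have := congrArg Prod.fst heq
                rw [hp1e] at this
                exact this
              exact w_ne_false _ _ this
            · right
              refine ⟨⟨Nat.succ_pos _, by simpa using hp1e ▸ hp1⟩, ?_⟩
              rintro ⟨hapos, hL⟩
              obtain ⟨a', rfl⟩ : ∃ a', a = a' + 1 := ⟨a - 1, by omega⟩
              have hc2 : ([false], w a' (b' + 1)).1 ∈ U ∧ ([false], w a' (b' + 1)).2 ∈ U ∧
                  ([false], w a' (b' + 1)).1 ≠ ([false], w a' (b' + 1)).2 ∧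
                  ([false], w a' (b' + 1)).1 ++ ([false], w a' (b' + 1)).2 = w (a' + 1) (b' + 1) :=
                ⟨false_mem hU, by simpa using hL, fun he => w_ne_false _ _ he.symm,
                  (w_succ_left _ _).symm⟩
              have heq := huniq _ hc2
              have h1 := congrArg Prod.fst heq
              rw [hp1e] at h1
              exact w_ne_false _ _ h1.symm
        · intro h
          apply (hU _).2
          refine Or.inr (Or.inr ⟨by rw [w_length]; omega, ?_⟩)
          rcases h with ⟨⟨hapos, hL⟩, hnR⟩ | ⟨⟨hbpos, hR⟩, hnL⟩
          · obtain ⟨a', rfl⟩ : ∃ a', a = a' + 1 := ⟨a - 1, by omega⟩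
            refine ⟨([false], w a' b), ⟨false_mem hU, by simpa using hL,
              fun he => w_ne_false a' b he.symm, (w_succ_left _ _).symm⟩, ?_⟩
            rintro ⟨y1, y2⟩ ⟨hy1, hy2, hyne, hyapp⟩
            rcases split_w hU hy1 hy2 hyapp with ⟨he1, a'', ha'', he2⟩ | ⟨he2, b', hb', he1⟩
            · have : a'' = a' := by omega
              subst this
              exact Prod.ext_iff.2 ⟨he1, he2⟩
            · exact absurd ⟨by omega, by rw [show b - 1 = b' from by omega, ← he1]; exact hy1⟩ hnR
          · obtain ⟨b', rfl⟩ : ∃ b', b = b' + 1 := ⟨b - 1, by omega⟩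
            refine ⟨(w a b', [false]), ⟨by simpa using hR, false_mem hU,
              w_ne_false a b', (w_succ_right _ _).symm⟩, ?_⟩
            rintro ⟨y1, y2⟩ ⟨hy1, hy2, hyne, hyapp⟩
            rcases split_w hU hy1 hy2 hyapp with ⟨he1, a', ha', he2⟩ | ⟨he2, b'', hb'', he1⟩
            · exact absurd ⟨by omega, by rw [show a - 1 = a' from by omega, ← he2]; exact hy2⟩ hnL
            · have : b'' = b' := by omega
              subst this
              exact Prod.ext_iff.2 ⟨he1, he2⟩
      -- now arithmetic
      rw [hmem]
      rcases Nat.eq_zero_or_pos a with ha | ha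
      · subst ha
        have hb : b = m + 1 := by omega
        subst hb
        have hR : 0 < m + 1 ∧ w 0 (m + 1 - 1) ∈ U :=
          ⟨Nat.succ_pos _, (ih m (by omega) 0 m (by omega)).2 (by simp)⟩
        simp only [Nat.choose_zero_right]
        exact iff_of_true (Or.inr ⟨hR, by simp⟩) (by decide)
      · rcases Nat.eq_zero_or_pos b with hb | hb
        · subst hb
          have ha' : a = m + 1 := by omega
          subst ha'
          have hL : 0 < m + 1 ∧ w (m + 1 - 1) 0 ∈ U :=
            ⟨Nat.succ_pos _, (ih m (by omega) m 0 (by omega)).2 (by simp)⟩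
          simp only [Nat.choose_self]
          exact iff_of_true (Or.inl ⟨hL, by simp⟩) (by decide)
        · obtain ⟨a', rfl⟩ : ∃ a', a = a' + 1 := ⟨a - 1, by omega⟩
          obtain ⟨b', rfl⟩ : ∃ b', b = b' + 1 := ⟨b - 1, by omega⟩
          have hm : m = a' + b' + 1 := by omega
          subst hm
          have hL := ih (a' + b' + 1) (by omega) a' (b' + 1) (by omega)
          have hR := ih (a' + b' + 1) (by omega) (a' + 1) b' (by omega)
          have hZ : (a' + b' + 1 + 1).choose (a' + 1) =
              (a' + b' + 1).choose a' + (a' + b' + 1).choose (a' + 1) :=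
            Nat.choose_succ_succ _ _
          rw [hZ]
          simp only [Nat.add_sub_cancel, hL, hR, Nat.succ_pos, true_and, Nat.odd_iff]
          omega

end UlamProofAux

theorem ulam_one_one (U : Set (List Bool)) (hU : IsUlamFamily U)
    (n i : ℕ) (hi1 : 1 ≤ i) (hin : i ≤ n) (u : List Bool)
    (hu : u = List.replicate (i - 1) false ++ true :: List.replicate (n - i) false) :
    u ∈ U ↔ Odd (Nat.choose (n - 1) (i - 1)) := by
  subst hu
  exact UlamProofAux.w_mem_iff hU (n - 1) (i - 1) (n - i) (by omega)
end

section
/- The only word in the Ulam set U({0,1}) consisting entirely of 0's is the single-letter word 0. -/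
theorem ulam_all_zeros (U : Set (List Bool)) (hU : IsUlamFamily U)
    (u : List Bool) (hu : u ∈ U) (hz : ∀ b ∈ u, b = false) : u = [false] := by
  have hempty : [] ∉ U := by
    intro h
    rcases (hU []).1 h with h1 | h1 | ⟨h2, _⟩
    · simp at h1
    · simp at h1
    · simp at h2
  suffices H : ∀ n : ℕ, ∀ u : List Bool, u.length ≤ n → u ∈ U →
      (∀ b ∈ u, b = false) → u = [false] from H u.length u le_rfl hu hz
  intro n
  induction n with
  | zero =>
    intro u hlen hu _
    have : u = [] := List.length_eq_zero_iff.1 (Nat.le_zero.1 hlen)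
    exact absurd (this ▸ hu) hempty
  | succ n ih =>
    intro u hlen hu hz
    rcases (hU u).1 hu with h | h | ⟨_, ⟨p, ⟨hp1, hp2, hne, happ⟩, _⟩⟩
    · exact h
    · exact absurd (hz true (by rw [h]; simp)) (by simp)
    · exfalso
      have h1ne : p.1 ≠ [] := fun e => hempty (e ▸ hp1)
      have h2ne : p.2 ≠ [] := fun e => hempty (e ▸ hp2)
      have hz1 : ∀ b ∈ p.1, b = false := fun b hb =>
        hz b (happ ▸ List.mem_append_left _ hb)
      have hz2 : ∀ b ∈ p.2, b = false := fun b hb =>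
        hz b (happ ▸ List.mem_append_right _ hb)
      have hl : p.1.length + p.2.length = u.length := by rw [← happ]; simp
      have pos1 := List.length_pos_iff.2 h1ne
      have pos2 := List.length_pos_iff.2 h2ne
      have e1 := ih p.1 (by omega) hp1 hz1
      have e2 := ih p.2 (by omega) hp2 hz2
      exact hne (e1.trans e2.symm)
end

section
/- Let u be a binary word of length n ≥ 2 consisting of two consecutive 1's and all other letters 0. Then u is in the Ulam set U({0,1}) if and only if n is odd. -/
namespace UlamAux

variable {U : Set (List Bool)}

lemma nil_notMem (hU : IsUlamFamily U) : [] ∉ U := by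
  intro h
  rcases (hU []).mp h with h | h | ⟨h2, -⟩
  · simp at h
  · simp at h
  · simp at h2

lemma false_mem (hU : IsUlamFamily U) : [false] ∈ U := (hU _).mpr (Or.inl rfl)

lemma true_mem (hU : IsUlamFamily U) : [true] ∈ U := (hU _).mpr (Or.inr (Or.inl rfl))

lemma ne_nil_of_mem (hU : IsUlamFamily U) {x : List Bool} (hx : x ∈ U) : x ≠ [] :=
  fun h => nil_notMem hU (h ▸ hx)

lemma replicate_notMem (hU : IsUlamFamily U) :
    ∀ a, 2 ≤ a → List.replicate a false ∉ U := by
  intro a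
  induction a using Nat.strong_induction_on with
  | _ a ih =>
    intro ha hmem
    rcases (hU _).mp hmem with h | h | ⟨-, p, ⟨h1, h2, hne, heq⟩, -⟩
    · have hL := congrArg List.length h
      simp only [List.length_replicate, List.length_cons, List.length_nil] at hL
      omega
    · have hL := congrArg List.length h
      simp only [List.length_replicate, List.length_cons, List.length_nil] at hL
      omega
    · have hx : p.1 = List.replicate p.1.length false := by
        rw [List.eq_replicate_iff]
        refine ⟨rfl, fun b hb => ?_⟩
        exact List.eq_of_mem_replicate (heq ▸ List.mem_append_left _ hb)
      have hy : p.2 = List.replicate p.2.length false := by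
        rw [List.eq_replicate_iff]
        refine ⟨rfl, fun b hb => ?_⟩
        exact List.eq_of_mem_replicate (heq ▸ List.mem_append_right _ hb)
      have hlen : p.1.length + p.2.length = a := by
        have := congrArg List.length heq
        simpa using this
      have hx1 : 0 < p.1.length := List.length_pos_iff.mpr (ne_nil_of_mem hU h1)
      have hy1 : 0 < p.2.length := List.length_pos_iff.mpr (ne_nil_of_mem hU h2)
      have hxl : p.1.length = 1 := by
        by_contra hc
        exact ih p.1.length (by omega) (by omega) (hx ▸ h1)
      have hyl : p.2.length = 1 := by
        by_contra hc
        exact ih p.2.length (by omega) (by omega) (hy ▸ h2)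
      apply hne
      rw [hx, hy, hxl, hyl]

lemma mem_all_false (hU : IsUlamFamily U) {x : List Bool} (hx : x ∈ U)
    (hall : ∀ b ∈ x, b = false) : x = [false] := by
  have hrep : x = List.replicate x.length false := List.eq_replicate_iff.mpr ⟨rfl, hall⟩
  have h1 : 0 < x.length := List.length_pos_iff.mpr (ne_nil_of_mem hU hx)
  have h2 : x.length = 1 := by
    by_contra hc
    exact replicate_notMem hU x.length (by omega) (hrep ▸ hx)
  rw [hrep, h2]
  rfl

/-- classification of splits of `0^k 1 1 0^l`. -/
lemma split_classify (k l : ℕ) (x y : List Bool)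
    (h : x ++ y = List.replicate k false ++ true :: true :: List.replicate l false)
    (hx : x ≠ []) (hy : y ≠ []) :
    (∃ i, 1 ≤ i ∧ i ≤ k ∧ x = List.replicate i false ∧
        y = List.replicate (k - i) false ++ true :: true :: List.replicate l false) ∨
    (x = List.replicate k false ++ [true] ∧ y = true :: List.replicate l false) ∨
    (∃ j, j < l ∧ x = List.replicate k false ++ true :: true :: List.replicate j false ∧
        y = List.replicate (l - j) false) := by
  rcases List.append_eq_append_iff.mp h with ⟨c, hc1, hc2⟩ | ⟨c, hc1, hc2⟩
  · -- replicate k false = x ++ c, y = c ++ (true :: true :: replicate l false)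
    have hxr : x = List.replicate x.length false := by
      rw [List.eq_replicate_iff]
      exact ⟨rfl, fun b hb => List.eq_of_mem_replicate (hc1 ▸ List.mem_append_left _ hb)⟩
    have hcr : c = List.replicate c.length false := by
      rw [List.eq_replicate_iff]
      exact ⟨rfl, fun b hb => List.eq_of_mem_replicate (hc1 ▸ List.mem_append_right _ hb)⟩
    have hlen : x.length + c.length = k := by
      have := congrArg List.length hc1
      simp at this
      omega
    have hx1 : 0 < x.length := List.length_pos_iff.mpr hx
    left
    refine ⟨x.length, by omega, by omega, hxr, ?_⟩
    rw [hc2, hcr]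
    congr 1
    congr 1
    omega
  · -- x = replicate k false ++ c, true :: true :: replicate l false = c ++ y
    rcases c with - | ⟨b, c⟩
    · -- c = [] : x = replicate k false
      simp only [List.append_nil] at hc1
      rw [List.nil_append] at hc2
      have hx1 : 0 < x.length := List.length_pos_iff.mpr hx
      have hkx : x.length = k := by rw [hc1]; simp
      left
      refine ⟨k, by omega, le_refl _, by rw [hc1], ?_⟩
      rw [← hc2]
      simp
    · rw [List.cons_append] at hc2
      injection hc2 with hb hc2
      rcases c with - | ⟨b2, c⟩
      · -- c = [true]
        rw [List.nil_append] at hc2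
        right; left
        exact ⟨by rw [hc1, ← hb], by rw [← hc2]⟩
      · rw [List.cons_append] at hc2
        injection hc2 with hb2 hc2
        -- replicate l false = c ++ y
        have hyr : y = List.replicate y.length false := by
          rw [List.eq_replicate_iff]
          exact ⟨rfl, fun b hbm => List.eq_of_mem_replicate (hc2 ▸ List.mem_append_right _ hbm)⟩
        have hcr : c = List.replicate c.length false := by
          rw [List.eq_replicate_iff]
          exact ⟨rfl, fun b hbm => List.eq_of_mem_replicate (hc2 ▸ List.mem_append_left _ hbm)⟩
        have hlen : c.length + y.length = l := by
          have := congrArg List.length hc2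
          simp at this
          omega
        have hy1 : 0 < y.length := List.length_pos_iff.mpr hy
        right; right
        refine ⟨c.length, by omega, ?_, ?_⟩
        · rw [hc1, ← hb, ← hb2]
          conv_lhs => rw [hcr]
        · conv_lhs => rw [hyr]
          congr 1
          omega

lemma left_mem (hU : IsUlamFamily U) : ∀ k, List.replicate k false ++ [true] ∈ U := by
  intro k
  induction k with
  | zero => simpa using true_mem hU
  | succ k ih =>
    rw [hU]
    refine Or.inr (Or.inr ⟨?_, ⟨([false], List.replicate k false ++ [true]),
      ⟨false_mem hU, ih, ?_, ?_⟩, ?_⟩⟩)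
    · simp
    · intro hcon
      dsimp only at hcon
      have htm : true ∈ ([false] : List Bool) := by
        rw [hcon]; exact List.mem_append_right _ (by simp)
      simp at htm
    · simp [List.replicate_succ]
    · rintro ⟨a, b⟩ ⟨h1, h2, hne, heq⟩
      dsimp only at h1 h2 hne heq
      rcases List.append_eq_append_iff.mp heq with ⟨c, hc1, hc2⟩ | ⟨c, hc1, hc2⟩
      · -- replicate (k+1) false = a ++ c, b = c ++ [true]
        have ha : a = [false] := by
          refine mem_all_false hU h1 (fun x hx => ?_)
          exact List.eq_of_mem_replicate (hc1 ▸ List.mem_append_left _ hx)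
        rw [ha] at hc1
        rw [List.replicate_succ] at hc1
        have hc : c = List.replicate k false := by
          have h' := hc1.symm
          rw [List.singleton_append] at h'
          rw [List.cons.injEq] at h'
          exact h'.2
        simp only [Prod.mk.injEq]
        exact ⟨ha, by rw [hc2, hc]⟩
      · -- a = replicate (k+1) false ++ c, [true] = c ++ b
        rcases c with - | ⟨cb, c⟩
        · rw [List.nil_append] at hc2
          rw [List.append_nil] at hc1
          have hk : k = 0 := by
            by_contra hk
            exact replicate_notMem hU (k+1) (by omega) (hc1 ▸ h1)
          subst hk
          simp only [Prod.mk.injEq]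
          exact ⟨hc1, hc2.symm⟩
        · rw [List.cons_append] at hc2
          injection hc2 with _ hc2
          exact absurd hc2.symm (by simp [ne_nil_of_mem hU h2])

lemma right_mem (hU : IsUlamFamily U) : ∀ l, true :: List.replicate l false ∈ U := by
  intro l
  induction l with
  | zero => simpa using true_mem hU
  | succ l ih =>
    rw [hU]
    refine Or.inr (Or.inr ⟨?_, ⟨(true :: List.replicate l false, [false]),
      ⟨ih, false_mem hU, ?_, ?_⟩, ?_⟩⟩)
    · simp
    · intro hcon
      dsimp only at hcon
      have htm : true ∈ ([false] : List Bool) := by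
        rw [← hcon]; simp
      simp at htm
    · simp [List.replicate_succ']
    · rintro ⟨a, b⟩ ⟨h1, h2, hne, heq⟩
      dsimp only at h1 h2 hne heq
      have heq' : a ++ b = [true] ++ List.replicate (l+1) false := heq
      rcases List.append_eq_append_iff.mp heq' with ⟨c, hc1, hc2⟩ | ⟨c, hc1, hc2⟩
      · -- [true] = a ++ c, b = c ++ replicate (l+1) false
        have hL := congrArg List.length hc1
        simp at hL
        have ha1 : 0 < a.length := List.length_pos_iff.mpr (ne_nil_of_mem hU h1)
        have hc0 : c = [] := by
          rw [← List.length_eq_zero_iff]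
          omega
        subst hc0
        simp only [List.append_nil] at hc1
        rw [List.nil_append] at hc2
        have hb : b = [false] :=
          mem_all_false hU h2 (fun x hx => List.eq_of_mem_replicate (hc2 ▸ hx))
        have hl : l = 0 := by
          have h' := congrArg List.length (hb.symm.trans hc2)
          simp at h'
          omega
        subst hl
        simp only [Prod.mk.injEq]
        exact ⟨hc1.symm, hb⟩
      · -- a = [true] ++ c, replicate (l+1) false = c ++ b
        have hb : b = [false] := by
          refine mem_all_false hU h2 (fun x hx => ?_)
          exact List.eq_of_mem_replicate (hc2 ▸ List.mem_append_right _ hx)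
        have hc : c = List.replicate l false := by
          rw [List.eq_replicate_iff]
          constructor
          · have h' := congrArg List.length hc2
            rw [hb] at h'
            simp at h'
            omega
          · intro x hx
            exact List.eq_of_mem_replicate (hc2 ▸ List.mem_append_left _ hx)
        simp only [Prod.mk.injEq]
        refine ⟨?_, hb⟩
        rw [hc1, hc]
        rfl

lemma main (hU : IsUlamFamily U) : ∀ n k l, k + l = n →
    ((List.replicate k false ++ true :: true :: List.replicate l false) ∈ U ↔ Odd n) := by
  intro n
  induction n using Nat.strong_induction_on with
  | _ n ih =>
    intro k l hkl
    rcases Nat.even_or_odd n with heven | hodd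
    · -- n even : not a member
      constructor
      · intro hmem
        exfalso
        rcases (hU _).mp hmem with h | h | ⟨hlen, q, ⟨h1, h2, hne, heq⟩, huniq⟩
        · have hL := congrArg List.length h
          simp only [List.length_append, List.length_replicate, List.length_cons,
            List.length_nil] at hL
          omega
        · have hL := congrArg List.length h
          simp only [List.length_append, List.length_replicate, List.length_cons,
            List.length_nil] at hL
          omega
        · rcases Nat.eq_zero_or_pos n with hn0 | hnpos
          · -- n = 0 : [true, true] has no representation at all
            have hk0 : k = 0 := by omega
            have hl0 : l = 0 := by omega
            subst hk0; subst hl0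
            rcases split_classify 0 0 q.1 q.2 heq (ne_nil_of_mem hU h1)
                (ne_nil_of_mem hU h2) with ⟨i, hi1, hi2, -, -⟩ | ⟨hxa, hxb⟩ | ⟨j, hj, -, -⟩
            · omega
            · exact hne (hxa.trans hxb.symm)
            · omega
          · -- n ≥ 2 even : at least two representations
            have hn2 : 2 ≤ n := by
              rcases heven with ⟨m, hm⟩; omega
            have hodd' : Odd (n - 1) := by
              rw [Nat.odd_iff]; rw [Nat.even_iff] at heven; omega
            rcases Nat.eq_zero_or_pos k with hk0 | hkpos
            · -- k = 0, l = n ≥ 2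
              subst hk0
              obtain ⟨l', rfl⟩ : ∃ l', l = l' + 1 := ⟨l - 1, by omega⟩
              have e0 : (List.replicate 0 false ++ [true],
                  true :: List.replicate (l'+1) false) = q := by
                refine huniq _ ⟨left_mem hU 0, right_mem hU (l'+1), ?_, by simp⟩
                intro hcon
                have hL := congrArg List.length hcon
                simp only [List.length_append, List.length_replicate, List.length_cons,
                  List.length_nil] at hL
                omega
              have e2 : (List.replicate 0 false ++ true :: true :: List.replicate l' false,
                  [false]) = q := by
                refine huniq _ ⟨(ih (n-1) (by omega) 0 l' (by omega)).mpr hodd',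
                  false_mem hU, ?_, by simp [List.replicate_succ']⟩
                intro hcon
                have hL := congrArg List.length hcon
                simp only [List.length_append, List.length_replicate, List.length_cons,
                  List.length_nil] at hL
                omega
              have hfst := congrArg (fun p : List Bool × List Bool => p.1.length)
                (e0.trans e2.symm)
              simp only [List.length_append, List.length_replicate, List.length_cons,
                List.length_nil] at hfst
              omega
            · rcases Nat.eq_zero_or_pos l with hl0 | hlpos
              · -- l = 0, k = n ≥ 2
                subst hl0
                obtain ⟨k', rfl⟩ : ∃ k', k = k' + 1 := ⟨k - 1, by omega⟩
                have e0 : (List.replicate (k'+1) false ++ [true],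
                    true :: List.replicate 0 false) = q := by
                  refine huniq _ ⟨left_mem hU (k'+1), right_mem hU 0, ?_, by simp⟩
                  intro hcon
                  have hL := congrArg List.length hcon
                  simp only [List.length_append, List.length_replicate, List.length_cons,
                    List.length_nil] at hL
                  omega
                have e1 : ([false],
                    List.replicate k' false ++ true :: true :: List.replicate 0 false) = q := by
                  refine huniq _ ⟨false_mem hU, (ih (n-1) (by omega) k' 0 (by omega)).mpr hodd',
                    ?_, by simp [List.replicate_succ]⟩
                  intro hcon
                  have hL := congrArg List.length hcon
                  simp only [List.length_append, List.length_replicate, List.length_cons,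
                    List.length_nil] at hL
                  omega
                have hfst := congrArg (fun p : List Bool × List Bool => p.1.length)
                  (e0.trans e1.symm)
                simp only [List.length_append, List.length_replicate, List.length_cons,
                  List.length_nil] at hfst
                omega
              · -- k ≥ 1 and l ≥ 1
                obtain ⟨k', rfl⟩ : ∃ k', k = k' + 1 := ⟨k - 1, by omega⟩
                obtain ⟨l', rfl⟩ : ∃ l', l = l' + 1 := ⟨l - 1, by omega⟩
                have e1 : ([false],
                    List.replicate k' false ++ true :: true :: List.replicate (l'+1) false)
                    = q := by
                  refine huniq _ ⟨false_mem hU,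
                    (ih (n-1) (by omega) k' (l'+1) (by omega)).mpr hodd', ?_,
                    by simp [List.replicate_succ]⟩
                  intro hcon
                  have hL := congrArg List.length hcon
                  simp only [List.length_append, List.length_replicate, List.length_cons,
                    List.length_nil] at hL
                  omega
                have e2 : (List.replicate (k'+1) false ++ true :: true :: List.replicate l' false,
                    [false]) = q := by
                  refine huniq _ ⟨(ih (n-1) (by omega) (k'+1) l' (by omega)).mpr hodd',
                    false_mem hU, ?_, by simp [List.replicate_succ']⟩
                  intro hcon
                  have hL := congrArg List.length hcon
                  simp only [List.length_append, List.length_replicate, List.length_cons,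
                    List.length_nil] at hL
                  omega
                have hfst := congrArg (fun p : List Bool × List Bool => p.1.length)
                  (e1.trans e2.symm)
                simp only [List.length_append, List.length_replicate, List.length_cons,
                  List.length_nil] at hfst
                omega
      · intro h2
        rw [Nat.odd_iff] at h2
        rw [Nat.even_iff] at heven
        omega
    · -- n odd : member with unique representation
      have hn1 : 1 ≤ n := hodd.pos
      constructor
      · intro _; exact hodd
      · rintro -
        have hklne : k ≠ l := by
          intro h; rw [Nat.odd_iff] at hodd; omega
        rw [hU]
        refine Or.inr (Or.inr ⟨?_,
          ⟨(List.replicate k false ++ [true], true :: List.replicate l false),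
            ⟨left_mem hU k, right_mem hU l, ?_, by simp⟩, ?_⟩⟩)
        · simp only [List.length_append, List.length_replicate, List.length_cons]
          omega
        · intro hcon
          dsimp only at hcon
          have hL := congrArg List.length hcon
          simp only [List.length_append, List.length_replicate, List.length_cons,
            List.length_nil] at hL
          omega
        · rintro ⟨a, b⟩ ⟨h1, h2, hne, heq⟩
          dsimp only at h1 h2 hne heq
          rcases split_classify k l a b heq (ne_nil_of_mem hU h1) (ne_nil_of_mem hU h2) with
            ⟨i, hi1, hi2, hxa, hxb⟩ | ⟨hxa, hxb⟩ | ⟨j, hj, hxa, hxb⟩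
          · exfalso
            have ha : a = [false] := mem_all_false hU h1
              (fun x hx => List.eq_of_mem_replicate (hxa ▸ hx))
            have hi : i = 1 := by
              have hL := congrArg List.length (ha.symm.trans hxa)
              simp only [List.length_replicate, List.length_cons, List.length_nil] at hL
              omega
            subst hi
            have hmem2 : List.replicate (k-1) false ++
                true :: true :: List.replicate l false ∈ U := hxb ▸ h2
            have hpar := (ih (n-1) (by omega) (k-1) l (by omega)).mp hmem2
            rw [Nat.odd_iff] at hpar hodd
            omega
          · simp only [Prod.mk.injEq]
            exact ⟨hxa, hxb⟩
          · exfalso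
            have hb : b = [false] := mem_all_false hU h2
              (fun x hx => List.eq_of_mem_replicate (hxb ▸ hx))
            have hj1 : l - j = 1 := by
              have hL := congrArg List.length (hb.symm.trans hxb)
              simp only [List.length_replicate, List.length_cons, List.length_nil] at hL
              omega
            have hjl : j = l - 1 := by omega
            subst hjl
            have hmem2 : List.replicate k false ++
                true :: true :: List.replicate (l-1) false ∈ U := hxa ▸ h1
            have hpar := (ih (n-1) (by omega) k (l-1) (by omega)).mp hmem2
            rw [Nat.odd_iff] at hpar hodd
            omega

end UlamAux

theorem ulam_consecutive_ones (U : Set (List Bool)) (hU : IsUlamFamily U)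
    (k l : ℕ) (u : List Bool)
    (hu : u = List.replicate k false ++ true :: true :: List.replicate l false) :
    u ∈ U ↔ Odd u.length := by
  subst hu
  rw [UlamAux.main hU (k+l) k l rfl]
  simp only [List.length_append, List.length_replicate, List.length_cons]
  rw [Nat.odd_iff, Nat.odd_iff]
  omega
end

section
/- Let u be a binary word of length n ≥ 5 with exactly two 1's separated by exactly one 0 (i.e., containing the pattern 101 with all other letters 0). Then u is in the Ulam set U({0,1}) if and only if n is even. -/
namespace Ulam101

def Z (m : ℕ) : List Bool := List.replicate m false
def W1 (a : ℕ) : List Bool := Z a ++ [true]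
def W2 (b : ℕ) : List Bool := true :: Z b
def W3 (a : ℕ) : List Bool := Z a ++ [true, false]
def W4 (b : ℕ) : List Bool := false :: true :: Z b
def W (k l : ℕ) : List Bool := Z k ++ true :: false :: true :: Z l

@[simp] lemma length_Z (m : ℕ) : (Z m).length = m := by simp [Z]
@[simp] lemma length_W1 (a : ℕ) : (W1 a).length = a + 1 := by simp [W1]
@[simp] lemma length_W2 (b : ℕ) : (W2 b).length = b + 1 := by simp [W2]
@[simp] lemma length_W3 (a : ℕ) : (W3 a).length = a + 2 := by simp [W3]
@[simp] lemma length_W4 (b : ℕ) : (W4 b).length = b + 2 := by simp [W4]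
@[simp] lemma length_W (k l : ℕ) : (W k l).length = k + l + 3 := by simp [W]; ring

@[simp] lemma count_Z (m : ℕ) : (Z m).count true = 0 := by simp [Z, List.count_replicate]
@[simp] lemma count_W1 (a : ℕ) : (W1 a).count true = 1 := by simp [W1]
@[simp] lemma count_W2 (b : ℕ) : (W2 b).count true = 1 := by simp [W2]
@[simp] lemma count_W3 (a : ℕ) : (W3 a).count true = 1 := by simp [W3]
@[simp] lemma count_W4 (b : ℕ) : (W4 b).count true = 1 := by simp [W4]
@[simp] lemma count_W (k l : ℕ) : (W k l).count true = 2 := by simp [W]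

variable {U : Set (List Bool)}

lemma not_nil_mem (hU : IsUlamFamily U) : [] ∉ U := by
  intro h; rw [hU] at h; simp at h

lemma mem_false (hU : IsUlamFamily U) : [false] ∈ U := (hU _).mpr (Or.inl rfl)
lemma mem_true (hU : IsUlamFamily U) : [true] ∈ U := (hU _).mpr (Or.inr (Or.inl rfl))

lemma splitZ {a b : List Bool} {m : ℕ} (h : a ++ b = Z m) :
    a = Z a.length ∧ b = Z b.length ∧ a.length + b.length = m := by
  have ha : a = Z a.length := by
    apply List.eq_replicate_of_mem
    intro x hx
    have : x ∈ Z m := h ▸ List.mem_append_left _ hx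
    exact List.eq_of_mem_replicate this
  have hb : b = Z b.length := by
    apply List.eq_replicate_of_mem
    intro x hx
    have : x ∈ Z m := h ▸ List.mem_append_right _ hx
    exact List.eq_of_mem_replicate this
  refine ⟨ha, hb, ?_⟩
  have := congrArg List.length h
  simpa using this

lemma split_cons_aux : ∀ (k : ℕ) (a b t : List Bool), a ++ b = Z k ++ true :: t →
    (∃ i, i ≤ k ∧ a = Z i ∧ b = Z (k - i) ++ true :: t) ∨
    (∃ s, a = Z k ++ true :: s ∧ t = s ++ b) := by
  intro k
  induction k with
  | zero =>
    intro a b t h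
    simp only [Z, List.replicate, List.nil_append] at h ⊢
    match a, h with
    | [], h => exact Or.inl ⟨0, le_refl _, rfl, by simpa using h⟩
    | x :: a', h =>
      simp only [List.cons_append, List.cons.injEq] at h
      exact Or.inr ⟨a', by simp [h.1], h.2.symm⟩
  | succ k ih =>
    intro a b t h
    match a, h with
    | [], h => exact Or.inl ⟨0, by omega, rfl, by simpa using h⟩
    | x :: a', h =>
      rw [show Z (k+1) = false :: Z k by simp [Z, List.replicate]] at h
      simp only [List.cons_append, List.cons.injEq] at h
      rcases ih a' b t h.2 with ⟨i, hik, ha', hb⟩ | ⟨s, ha', ht⟩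
      · refine Or.inl ⟨i + 1, by omega, ?_, ?_⟩
        · rw [show Z (i+1) = false :: Z i by simp [Z, List.replicate], h.1, ha']
        · rwa [show k + 1 - (i+1) = k - i by omega]
      · refine Or.inr ⟨s, ?_, ht⟩
        rw [show Z (k+1) = false :: Z k by simp [Z, List.replicate], h.1, ha']
        simp


lemma Z_succ (m : ℕ) : Z (m + 1) = false :: Z m := by simp [Z, List.replicate_succ]

lemma Z_add (i j : ℕ) : Z i ++ Z j = Z (i + j) :=
  (List.replicate_add i j false).symm

lemma split_W1 {a b : List Bool} {n : ℕ} (h : a ++ b = W1 n) :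
    b = [] ∨ (∃ i, i ≤ n ∧ a = Z i ∧ b = W1 (n - i)) := by
  rcases split_cons_aux n a b [] h with ⟨i, hik, ha, hb⟩ | ⟨s, ha, ht⟩
  · exact Or.inr ⟨i, hik, ha, hb⟩
  · have : s = [] ∧ b = [] := by simpa using ht.symm
    exact Or.inl this.2

lemma split_W2 {a b : List Bool} {n : ℕ} (h : a ++ b = W2 n) :
    a = [] ∨ (∃ i j, i + j = n ∧ a = W2 i ∧ b = Z j) := by
  match a, h with
  | [], h => exact Or.inl rfl
  | x :: a', h =>
    simp only [W2, List.cons_append, List.cons.injEq] at h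
    obtain ⟨ha', hb, hlen⟩ := splitZ h.2
    refine Or.inr ⟨a'.length, b.length, hlen, ?_, hb⟩
    rw [W2, h.1]
    exact congrArg (List.cons true) ha'

lemma split_W3 {a b : List Bool} {n : ℕ} (h : a ++ b = W3 n) :
    b = [] ∨ (∃ i, i ≤ n ∧ a = Z i ∧ b = W3 (n - i)) ∨ (a = W1 n ∧ b = [false]) := by
  rcases split_cons_aux n a b [false] h with ⟨i, hik, ha, hb⟩ | ⟨s, ha, ht⟩
  · exact Or.inr (Or.inl ⟨i, hik, ha, hb⟩)
  · match s, ht with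
    | [], ht =>
      refine Or.inr (Or.inr ⟨?_, by simpa using ht.symm⟩)
      rw [ha]; rfl
    | x :: s', ht =>
      simp only [List.cons_append, List.cons.injEq] at ht
      exact Or.inl (List.append_eq_nil_iff.mp ht.2.symm).2

lemma split_W4 {a b : List Bool} {n : ℕ} (h : a ++ b = W4 n) :
    a = [] ∨ (a = [false] ∧ b = W2 n) ∨ (∃ i j, i + j = n ∧ a = W4 i ∧ b = Z j) := by
  match a, h with
  | [], _ => exact Or.inl rfl
  | [x], h =>
    simp only [W4, List.cons_append, List.nil_append, List.cons.injEq] at h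
    exact Or.inr (Or.inl ⟨by rw [h.1], h.2⟩)
  | x :: y :: a', h =>
    simp only [W4, List.cons_append, List.cons.injEq] at h
    obtain ⟨ha', hb, hlen⟩ := splitZ h.2.2
    refine Or.inr (Or.inr ⟨a'.length, b.length, hlen, ?_, hb⟩)
    rw [W4, h.1, h.2.1]
    exact congrArg (fun t => false :: true :: t) ha'

lemma split_W {a b : List Bool} {k l : ℕ} (h : a ++ b = W k l) :
    a = [] ∨ b = [] ∨
    (∃ i, 1 ≤ i ∧ i ≤ k ∧ a = Z i ∧ b = W (k - i) l) ∨
    (a = W1 k ∧ b = W4 l) ∨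
    (a = W3 k ∧ b = W2 l) ∨
    (∃ j, 1 ≤ j ∧ j ≤ l ∧ a = W k (l - j) ∧ b = Z j) := by
  rcases split_cons_aux k a b (false :: true :: Z l) h with ⟨i, hik, ha, hb⟩ | ⟨s, ha, ht⟩
  · rcases Nat.eq_zero_or_pos i with rfl | hi
    · left; simpa [Z] using ha
    · exact Or.inr (Or.inr (Or.inl ⟨i, hi, hik, ha, hb⟩))
  · match s, ht with
    | [], ht =>
      refine Or.inr (Or.inr (Or.inr (Or.inl ⟨?_, by simpa [W4] using ht.symm⟩)))
      rw [ha]; rfl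
    | [x], ht =>
      simp only [List.cons_append, List.nil_append, List.cons.injEq] at ht
      refine Or.inr (Or.inr (Or.inr (Or.inr (Or.inl ⟨?_, by rw [W2, ← ht.2]⟩))))
      rw [ha, ← ht.1]; rfl
    | x :: y :: s', ht =>
      simp only [List.cons_append, List.cons.injEq] at ht
      obtain ⟨hx, hy, hz⟩ := ht
      obtain ⟨hs', hb, hlen⟩ := splitZ hz.symm
      rcases Nat.eq_zero_or_pos b.length with hb0 | hbpos
      · right; left; exact List.eq_nil_of_length_eq_zero hb0
      · refine Or.inr (Or.inr (Or.inr (Or.inr (Or.inr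
          ⟨b.length, hbpos, by omega, ?_, hb⟩))))
        rw [ha, ← hx, ← hy, W, show l - b.length = s'.length by omega]
        exact congrArg (fun t => Z k ++ true :: false :: true :: t) hs'

lemma ne_nil_of_mem (hU : IsUlamFamily U) {u : List Bool} (h : u ∈ U) : u ≠ [] := by
  rintro rfl; exact not_nil_mem hU h

lemma Z_one : Z 1 = [false] := List.replicate_one

lemma memZ (hU : IsUlamFamily U) : ∀ m, Z m ∈ U ↔ m = 1 := by
  intro m
  induction m using Nat.strong_induction_on with
  | _ m IH =>
    constructor
    · intro h
      by_contra hm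
      rw [hU] at h
      rcases h with h | h | ⟨hlen, p, ⟨h1, h2, hne, happ⟩, -⟩
      · exact hm (by simpa using congrArg List.length h)
      · exact hm (by simpa using congrArg List.length h)
      · obtain ⟨ha, hb, hlen2⟩ := splitZ happ
        have h1pos : 0 < p.1.length := List.length_pos_iff.mpr (ne_nil_of_mem hU h1)
        have h2pos : 0 < p.2.length := List.length_pos_iff.mpr (ne_nil_of_mem hU h2)
        have e1 : p.1.length = 1 := (IH p.1.length (by omega)).mp (ha ▸ h1)
        have e2 : p.2.length = 1 := (IH p.2.length (by omega)).mp (hb ▸ h2)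
        apply hne
        rw [ha, hb, e1, e2]
    · rintro rfl
      simpa [Z_one] using mem_false hU

lemma memW1 (hU : IsUlamFamily U) : ∀ a, W1 a ∈ U := by
  intro a
  induction a using Nat.strong_induction_on with
  | _ a IH =>
    match a with
    | 0 => simpa [W1, Z] using mem_true hU
    | n + 1 =>
      rw [hU]
      refine Or.inr (Or.inr ⟨by simp, ⟨(Z 1, W1 n), ⟨?_, ?_, ?_, ?_⟩, ?_⟩⟩)
      · simpa [Z_one] using mem_false hU
      · exact IH n (by omega)
      · intro h; simpa using congrArg (List.count true) h
      · show Z 1 ++ W1 n = W1 (n + 1)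
        rw [W1, W1, ← List.append_assoc, Z_add, Nat.add_comm]
      · rintro ⟨c, d⟩ ⟨hc, hd, hne, happ⟩
        rcases split_W1 happ with rfl | ⟨i, hin, rfl, rfl⟩
        · exact absurd rfl (ne_nil_of_mem hU hd)
        · have hi : i = 1 := (memZ hU i).mp hc
          subst hi
          simp

lemma memW2 (hU : IsUlamFamily U) : ∀ b, W2 b ∈ U := by
  intro b
  induction b using Nat.strong_induction_on with
  | _ b IH =>
    match b with
    | 0 => simpa [W2, Z] using mem_true hU
    | n + 1 =>
      rw [hU]
      refine Or.inr (Or.inr ⟨by simp, ⟨(W2 n, Z 1), ⟨IH n (by omega), ?_, ?_, ?_⟩, ?_⟩⟩)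
      · simpa [Z_one] using mem_false hU
      · intro h; simpa using congrArg (List.count true) h
      · show W2 n ++ Z 1 = W2 (n + 1)
        rw [W2, W2, List.cons_append, Z_add]
      · rintro ⟨c, d⟩ ⟨hc, hd, hne, happ⟩
        rcases split_W2 happ with rfl | ⟨i, j, hij, rfl, rfl⟩
        · exact absurd rfl (ne_nil_of_mem hU hc)
        · have hj : j = 1 := (memZ hU j).mp hd
          subst hj
          have hi : i = n := by omega
          subst hi
          rfl

lemma memW3 (hU : IsUlamFamily U) : ∀ a, W3 a ∈ U ↔ Even a := by
  intro a
  induction a using Nat.strong_induction_on with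
  | _ a IH =>
    constructor
    · intro h
      by_contra hodd
      obtain ⟨t, ht⟩ := Nat.not_even_iff_odd.mp hodd
      rw [hU] at h
      rcases h with h | h | ⟨hlen, p, hp, huni⟩
      · exact absurd (congrArg List.length h) (by simp)
      · exact absurd (congrArg List.length h) (by simp)
      · have hq1 := huni (Z 1, W3 (a - 1)) ⟨by simpa [Z_one] using mem_false hU,
          (IH (a - 1) (by omega)).mpr ⟨t, by omega⟩,
          by intro hcon; simpa using congrArg (List.count true) hcon,
          by show Z 1 ++ W3 (a - 1) = W3 a
             rw [W3, W3, ← List.append_assoc, Z_add, show 1 + (a - 1) = a by omega]⟩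
        have hq2 := huni (W1 a, [false]) ⟨memW1 hU a, mem_false hU,
          by intro hcon; simpa using congrArg (List.count true) hcon,
          by show W1 a ++ [false] = W3 a
             rw [W1, W3, List.append_assoc]; rfl⟩
        have hcc : Z 1 = W1 a := congrArg Prod.fst (hq1.trans hq2.symm)
        simpa using congrArg (List.count true) hcc
    · intro heven
      rw [hU]
      refine Or.inr (Or.inr ⟨by simp, ⟨(W1 a, [false]), ⟨memW1 hU a, mem_false hU, ?_, ?_⟩, ?_⟩⟩)
      · intro hcon; simpa using congrArg (List.count true) hcon
      · show W1 a ++ [false] = W3 a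
        rw [W1, W3, List.append_assoc]; rfl
      · rintro ⟨c, d⟩ ⟨hc, hd, hne, happ⟩
        rcases split_W3 happ with rfl | ⟨i, hia, rfl, rfl⟩ | ⟨rfl, rfl⟩
        · exact absurd rfl (ne_nil_of_mem hU hd)
        · exfalso
          have hi : i = 1 := (memZ hU i).mp hc
          subst hi
          have h1 : Even (a - 1) := (IH (a - 1) (by omega)).mp hd
          obtain ⟨x, hx⟩ := heven
          obtain ⟨y, hy⟩ := h1
          omega
        · rfl

lemma memW4 (hU : IsUlamFamily U) : ∀ b, W4 b ∈ U ↔ Even b := by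
  intro b
  induction b using Nat.strong_induction_on with
  | _ b IH =>
    constructor
    · intro h
      by_contra hodd
      obtain ⟨t, ht⟩ := Nat.not_even_iff_odd.mp hodd
      rw [hU] at h
      rcases h with h | h | ⟨hlen, p, hp, huni⟩
      · exact absurd (congrArg List.length h) (by simp)
      · exact absurd (congrArg List.length h) (by simp)
      · have hq1 := huni ([false], W2 b) ⟨mem_false hU, memW2 hU b,
          by intro hcon; simpa using congrArg (List.count true) hcon,
          rfl⟩
        have hq2 := huni (W4 (b - 1), Z 1) ⟨(IH (b - 1) (by omega)).mpr ⟨t, by omega⟩,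
          by simpa [Z_one] using mem_false hU,
          by intro hcon; simpa using congrArg (List.count true) hcon,
          by show W4 (b - 1) ++ Z 1 = W4 b
             rw [W4, W4, List.cons_append, List.cons_append, Z_add,
               show b - 1 + 1 = b by omega]⟩
        have hcc : ([false] : List Bool) = W4 (b - 1) := congrArg Prod.fst (hq1.trans hq2.symm)
        simpa using congrArg (List.count true) hcc
    · intro heven
      rw [hU]
      refine Or.inr (Or.inr ⟨by simp, ⟨([false], W2 b), ⟨mem_false hU, memW2 hU b, ?_, rfl⟩, ?_⟩⟩)
      · intro hcon; simpa using congrArg (List.count true) hcon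
      · rintro ⟨c, d⟩ ⟨hc, hd, hne, happ⟩
        rcases split_W4 happ with rfl | ⟨rfl, rfl⟩ | ⟨i, j, hij, rfl, rfl⟩
        · exact absurd rfl (ne_nil_of_mem hU hc)
        · rfl
        · exfalso
          have hj : j = 1 := (memZ hU j).mp hd
          subst hj
          have h1 : Even i := (IH i (by omega)).mp hc
          obtain ⟨x, hx⟩ := heven
          obtain ⟨y, hy⟩ := h1
          omega

lemma W1_ne_W4 {k l : ℕ} (h : ¬(k = 1 ∧ l = 0)) : W1 k ≠ W4 l := by
  intro heq
  have hlen : k + 1 = l + 2 := by simpa using congrArg List.length heq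
  have hk : k = l + 1 := by omega
  subst hk
  match l, h, heq with
  | 0, h, heq => exact h ⟨rfl, rfl⟩
  | l' + 1, h, heq =>
    have h1 : (W1 (l' + 1 + 1))[1]? = some false := by
      rw [W1, List.getElem?_append]
      simp [Z, List.getElem?_replicate]
    rw [heq, W4] at h1
    simp at h1

lemma W3_ne_W2 {k l : ℕ} (h : ¬(k = 0 ∧ l = 1)) : W3 k ≠ W2 l := by
  intro heq
  have hlen : k + 2 = l + 1 := by simpa using congrArg List.length heq
  have hl : l = k + 1 := by omega
  subst hl
  match k, h, heq with
  | 0, h, heq => exact h ⟨rfl, rfl⟩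
  | k' + 1, h, heq =>
    rw [W3, W2] at heq
    simp [Z, List.replicate_succ] at heq

lemma memW (hU : IsUlamFamily U) : ∀ k l : ℕ, W k l ∈ U ↔ (2 ≤ k + l ∧ Odd (k + l)) := by
  suffices H : ∀ S k l : ℕ, k + l = S → (W k l ∈ U ↔ (2 ≤ k + l ∧ Odd (k + l))) by
    intro k l; exact H (k + l) k l rfl
  intro S
  induction S using Nat.strong_induction_on with
  | _ S IH =>
    intro k l hS
    have charV : ∀ c d : List Bool,
        (c ∈ U ∧ d ∈ U ∧ c ≠ d ∧ c ++ d = W k l) ↔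
        ((c = Z 1 ∧ d = W (k - 1) l ∧ 1 ≤ k ∧ 2 ≤ k - 1 + l ∧ Odd (k - 1 + l)) ∨
         (c = W1 k ∧ d = W4 l ∧ Even l ∧ W1 k ≠ W4 l) ∨
         (c = W3 k ∧ d = W2 l ∧ Even k ∧ W3 k ≠ W2 l) ∨
         (c = W k (l - 1) ∧ d = Z 1 ∧ 1 ≤ l ∧ 2 ≤ k + (l - 1) ∧ Odd (k + (l - 1)))) := by
      intro c d
      constructor
      · rintro ⟨hc, hd, hne, happ⟩
        rcases split_W happ with rfl | rfl | ⟨i, hi1, hik, rfl, rfl⟩ | ⟨rfl, rfl⟩ |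
          ⟨rfl, rfl⟩ | ⟨j, hj1, hjl, rfl, rfl⟩
        · exact absurd rfl (ne_nil_of_mem hU hc)
        · exact absurd rfl (ne_nil_of_mem hU hd)
        · have hi : i = 1 := (memZ hU i).mp hc
          subst hi
          have hres := (IH (k - 1 + l) (by omega) (k - 1) l rfl).mp hd
          exact Or.inl ⟨rfl, rfl, hik, hres.1, hres.2⟩
        · exact Or.inr (Or.inl ⟨rfl, rfl, (memW4 hU l).mp hd, hne⟩)
        · exact Or.inr (Or.inr (Or.inl ⟨rfl, rfl, (memW3 hU k).mp hc, hne⟩))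
        · have hj : j = 1 := (memZ hU j).mp hd
          subst hj
          have hres := (IH (k + (l - 1)) (by omega) k (l - 1) rfl).mp hc
          exact Or.inr (Or.inr (Or.inr ⟨rfl, rfl, hjl, hres.1, hres.2⟩))
      · rintro (⟨rfl, rfl, hk1, h2, hodd⟩ | ⟨rfl, rfl, hl, hne⟩ | ⟨rfl, rfl, hk, hne⟩ |
          ⟨rfl, rfl, hl1, h2, hodd⟩)
        · refine ⟨by simpa [Z_one] using mem_false hU,
            (IH (k - 1 + l) (by omega) (k - 1) l rfl).mpr ⟨h2, hodd⟩, ?_, ?_⟩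
          · intro hcon; simpa using congrArg (List.count true) hcon
          · rw [W, W, ← List.append_assoc, Z_add, show 1 + (k - 1) = k by omega]
        · refine ⟨memW1 hU k, (memW4 hU l).mpr hl, hne, ?_⟩
          rw [W1, W4, W, List.append_assoc]; rfl
        · refine ⟨(memW3 hU k).mpr hk, memW2 hU l, hne, ?_⟩
          rw [W3, W2, W, List.append_assoc]; rfl
        · refine ⟨(IH (k + (l - 1)) (by omega) k (l - 1) rfl).mpr ⟨h2, hodd⟩,
            by simpa [Z_one] using mem_false hU, ?_, ?_⟩
          · intro hcon; simpa using congrArg (List.count true) hcon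
          · rw [W, W, List.append_assoc, List.cons_append, List.cons_append,
              List.cons_append, Z_add, show l - 1 + 1 = l by omega]
    rw [hU (W k l)]
    constructor
    · rintro (h | h | ⟨-, p, hp, huni⟩)
      · exact absurd (congrArg List.length h) (by simp)
      · exact absurd (congrArg List.length h) (by simp)
      · obtain ⟨c, d⟩ := p
        rcases Nat.even_or_odd k with hk | hk <;> rcases Nat.even_or_odd l with hl | hl
        · -- both even: two representations PB, PC
          exfalso
          obtain ⟨x, hx⟩ := hk; obtain ⟨y, hy⟩ := hl
          have hB := huni (W1 k, W4 l) ((charV _ _).mpr (Or.inr (Or.inl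
            ⟨rfl, rfl, ⟨y, hy⟩, W1_ne_W4 (by omega)⟩)))
          have hC := huni (W3 k, W2 l) ((charV _ _).mpr (Or.inr (Or.inr (Or.inl
            ⟨rfl, rfl, ⟨x, hx⟩, W3_ne_W2 (by omega)⟩))))
          have hBC := hB.trans hC.symm
          have := congrArg (fun q : List Bool × List Bool => q.1.length) hBC
          simp at this
        · -- Even k, Odd l
          obtain ⟨x, hx⟩ := hk; obtain ⟨y, hy⟩ := hl
          by_cases h01 : k = 0 ∧ l = 1
          · exfalso
            obtain ⟨rfl, rfl⟩ := h01
            rcases (charV c d).mp hp with ⟨-, -, hc1, -, -⟩ | ⟨-, -, hE, -⟩ |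
              ⟨-, -, -, hne⟩ | ⟨-, -, -, hc2, -⟩
            · omega
            · obtain ⟨z, hz⟩ := hE; omega
            · exact hne (by decide)
            · omega
          · exact ⟨by omega, ⟨x + y, by omega⟩⟩
        · -- Odd k, Even l
          obtain ⟨x, hx⟩ := hk; obtain ⟨y, hy⟩ := hl
          by_cases h10 : k = 1 ∧ l = 0
          · exfalso
            obtain ⟨rfl, rfl⟩ := h10
            rcases (charV c d).mp hp with ⟨-, -, -, hc1, -⟩ | ⟨-, -, -, hne⟩ |
              ⟨-, -, hE, -⟩ | ⟨-, -, hc2, -, -⟩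
            · omega
            · exact hne (by decide)
            · obtain ⟨z, hz⟩ := hE; omega
            · omega
          · exact ⟨by omega, ⟨x + y, by omega⟩⟩
        · -- both odd
          exfalso
          obtain ⟨x, hx⟩ := hk; obtain ⟨y, hy⟩ := hl
          by_cases h11 : k = 1 ∧ l = 1
          · obtain ⟨rfl, rfl⟩ := h11
            rcases (charV c d).mp hp with ⟨-, -, -, hc1, -⟩ | ⟨-, -, hE, -⟩ |
              ⟨-, -, hE, -⟩ | ⟨-, -, -, hc2, -⟩
            · omega
            · obtain ⟨z, hz⟩ := hE; omega
            · obtain ⟨z, hz⟩ := hE; omega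
            · omega
          · have hA := huni (Z 1, W (k - 1) l) ((charV _ _).mpr (Or.inl
              ⟨rfl, rfl, by omega, by omega, ⟨x + y, by omega⟩⟩))
            have hD := huni (W k (l - 1), Z 1) ((charV _ _).mpr (Or.inr (Or.inr (Or.inr
              ⟨rfl, rfl, by omega, by omega, ⟨x + y, by omega⟩⟩))))
            have hAD := hA.trans hD.symm
            have := congrArg (fun q : List Bool × List Bool => List.count true q.1) hAD
            simp at this
    · rintro ⟨h2, t, ht⟩
      refine Or.inr (Or.inr ⟨by simp, ?_⟩)
      rcases Nat.even_or_odd k with hk | hk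
      · -- Even k: unique representation is PC
        obtain ⟨x, hx⟩ := hk
        refine ⟨(W3 k, W2 l), (charV _ _).mpr (Or.inr (Or.inr (Or.inl
          ⟨rfl, rfl, ⟨x, hx⟩, W3_ne_W2 (by omega)⟩))), ?_⟩
        rintro ⟨c, d⟩ hq
        rcases (charV c d).mp hq with ⟨-, -, hc1, -, hO⟩ | ⟨-, -, hE, -⟩ |
          ⟨rfl, rfl, -, -⟩ | ⟨-, -, hc2, -, hO⟩
        · exfalso; obtain ⟨z, hz⟩ := hO; omega
        · exfalso; obtain ⟨z, hz⟩ := hE; omega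
        · rfl
        · exfalso; obtain ⟨z, hz⟩ := hO; omega
      · -- Odd k: unique representation is PB
        obtain ⟨x, hx⟩ := hk
        refine ⟨(W1 k, W4 l), (charV _ _).mpr (Or.inr (Or.inl
          ⟨rfl, rfl, ⟨t - x, by omega⟩, W1_ne_W4 (by omega)⟩)), ?_⟩
        rintro ⟨c, d⟩ hq
        rcases (charV c d).mp hq with ⟨-, -, hc1, -, hO⟩ | ⟨rfl, rfl, -, -⟩ |
          ⟨-, -, hE, -⟩ | ⟨-, -, hc2, -, hO⟩
        · exfalso; obtain ⟨z, hz⟩ := hO; omega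
        · rfl
        · exfalso; obtain ⟨z, hz⟩ := hE; omega
        · exfalso; obtain ⟨z, hz⟩ := hO; omega

end Ulam101

theorem ulam_101 (U : Set (List Bool)) (hU : IsUlamFamily U)
    (k l : ℕ) (u : List Bool)
    (hu : u = List.replicate k false ++ true :: false :: true :: List.replicate l false)
    (hlen : 5 ≤ u.length) :
    u ∈ U ↔ Even u.length := by
  subst hu
  have e : List.replicate k false ++ true :: false :: true :: List.replicate l false
      = Ulam101.W k l := rfl
  rw [e, Ulam101.length_W] at hlen ⊢
  rw [Ulam101.memW hU k l]
  constructor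
  · rintro ⟨h2, t, ht⟩
    exact ⟨t + 2, by omega⟩
  · rintro ⟨t, ht⟩
    exact ⟨by omega, ⟨t - 2, by omega⟩⟩
end

section
/- Let a, b, n be nonnegative integers with a + b < n/2, and let S = { i : 0 ≤ i ≤ n and C(i,a)·C(n-i,b) is odd }. Then |S| ≠ 1. -/
/-!
Split `i` by parity. Lucas's theorem modulo 2 (`C(2j + r, a) ≡ C(r, a % 2) C(j, a / 2)`) turns the
count `K(n, a, b) = oddProductCount n a b` into the recursions
`K(2t + 1, a, b) = ([a even] + [b even]) K(t, a/2, b/2)` and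
`K(2t + 2, a, b) = [a, b even] K(t + 1, a/2, b/2) + K(t, a/2, b/2)`.
Strong induction on `n` then shows that for `n ≥ 2(a + b)` the count can equal `1` only at
`n = 2(a + b)`. The induction has to carry the companion fact that `K(n) = 1` forces
`K(n + 1) ≠ 0` once `n + 1 ≥ 2(a + b)`: in the even step it excludes
`K(s + 1, a/2, b/2) = 0` with `K(s, a/2, b/2) = 1`.
-/

open Finset

lemma Finset.sum_range_two_mul {M : Type*} [AddCommMonoid M] (f : ℕ → M) (N : ℕ) :
    ∑ i ∈ range (2 * N), f i =
      ∑ j ∈ range N, f (2 * j) + ∑ j ∈ range N, f (2 * j + 1) := by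
  induction N with
  | zero => simp
  | succ N ih =>
    rw [mul_add, mul_one, sum_range_succ, sum_range_succ, ih, sum_range_succ, sum_range_succ]
    abel

namespace Nat

lemma choose_mod_two (i a : ℕ) :
    i.choose a % 2 = (i % 2).choose (a % 2) * (i / 2).choose (a / 2) % 2 :=
  Choose.choose_modEq_choose_mod_mul_choose_div_nat

lemma choose_two_mul_mod_two (j a : ℕ) :
    (2 * j).choose a % 2 = if Even a then j.choose (a / 2) % 2 else 0 := by
  rw [choose_mod_two]
  rcases Nat.even_or_odd a with h | h
  · simp [h, Nat.even_iff.mp h]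
  · simp [Nat.not_even_iff_odd.mpr h, Nat.odd_iff.mp h]

lemma choose_two_mul_add_one_mod_two (j a : ℕ) :
    (2 * j + 1).choose a % 2 = j.choose (a / 2) % 2 := by
  rw [choose_mod_two]
  have hj : (2 * j + 1) / 2 = j := by omega
  rcases Nat.mod_two_eq_zero_or_one a with h | h <;> simp [h, hj]

end Nat

def oddProductCount (n a b : ℕ) : ℕ :=
  #{i ∈ range (n + 1) | Odd (i.choose a * (n - i).choose b)}

lemma oddProductCount_eq_sum (n a b : ℕ) :
    oddProductCount n a b = ∑ i ∈ range (n + 1), i.choose a % 2 * ((n - i).choose b % 2) := by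
  rw [oddProductCount, card_filter]
  refine sum_congr rfl fun i _ => ?_
  rcases Nat.mod_two_eq_zero_or_one (i.choose a) with h | h <;>
    rcases Nat.mod_two_eq_zero_or_one ((n - i).choose b) with h' | h' <;>
    simp [Nat.odd_iff, Nat.mul_mod, h, h']

lemma oddProductCount_two_mul_add_one (t a b : ℕ) :
    oddProductCount (2 * t + 1) a b =
      ((if Even a then 1 else 0) + (if Even b then 1 else 0)) *
        oddProductCount t (a / 2) (b / 2) := by
  rw [oddProductCount_eq_sum, oddProductCount_eq_sum, mul_sum,
    show 2 * t + 1 + 1 = 2 * (t + 1) by ring, sum_range_two_mul, ← sum_add_distrib]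
  refine sum_congr rfl fun j hj => ?_
  have hj : j ≤ t := mem_range_succ_iff.mp hj
  rw [show 2 * t + 1 - 2 * j = 2 * (t - j) + 1 by omega,
    show 2 * t + 1 - (2 * j + 1) = 2 * (t - j) by omega,
    Nat.choose_two_mul_mod_two, Nat.choose_two_mul_mod_two, Nat.choose_two_mul_add_one_mod_two,
    Nat.choose_two_mul_add_one_mod_two]
  split_ifs <;> ring

lemma oddProductCount_two_mul_add_two (t a b : ℕ) :
    oddProductCount (2 * t + 2) a b =
      (if Even a ∧ Even b then oddProductCount (t + 1) (a / 2) (b / 2) else 0) +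
        oddProductCount t (a / 2) (b / 2) := by
  rw [oddProductCount_eq_sum, oddProductCount_eq_sum, oddProductCount_eq_sum,
    show 2 * t + 2 + 1 = 2 * (t + 1) + 1 by ring, sum_range_succ, sum_range_two_mul,
    add_right_comm, ← sum_range_succ (fun j => _ % 2 * ((2 * t + 2 - 2 * j).choose b % 2))]
  congr 1
  · rw [← sum_const_zero, ← sum_ite_irrel]
    refine sum_congr rfl fun j hj => ?_
    have hj : j ≤ t + 1 := mem_range_succ_iff.mp hj
    rw [show 2 * t + 2 - 2 * j = 2 * (t + 1 - j) by omega,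
      Nat.choose_two_mul_mod_two, Nat.choose_two_mul_mod_two]
    split_ifs <;> simp_all
  · refine sum_congr rfl fun j hj => ?_
    have hj : j ≤ t := mem_range_succ_iff.mp hj
    rw [show 2 * t + 2 - (2 * j + 1) = 2 * (t - j) + 1 by omega,
      Nat.choose_two_mul_add_one_mod_two, Nat.choose_two_mul_add_one_mod_two]

theorem oddProductCount_eq_one_imp (n : ℕ) : ∀ a b : ℕ,
    (2 * (a + b) ≤ n → oddProductCount n a b = 1 → n = 2 * (a + b)) ∧
    (2 * (a + b) ≤ n + 1 → oddProductCount n a b = 1 →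
      oddProductCount (n + 1) a b ≠ 0) := by
  induction n using Nat.strong_induction_on with
  | _ n ih =>
  intro a b
  obtain ⟨t, rfl | rfl⟩ := Nat.even_or_odd' n
  · cases t with
    | zero =>
      refine ⟨fun h _ => by omega, fun h _ => ?_⟩
      obtain ⟨rfl, rfl⟩ : a = 0 ∧ b = 0 := by omega
      decide
    | succ s =>
      have ih₀ := ih s (by omega) (a / 2) (b / 2)
      have ih₁ := (ih (s + 1) (by omega) (a / 2) (b / 2)).1
      rw [show 2 * (s + 1) = 2 * s + 2 by ring, show 2 * s + 2 + 1 = 2 * (s + 1) + 1 by ring,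
        oddProductCount_two_mul_add_two, oddProductCount_two_mul_add_one]
      simp only [Nat.even_iff]
      constructor <;> intro h hK <;> split_ifs at hK ⊢ <;> omega
  · have ih₀ := (ih t (by omega) (a / 2) (b / 2)).1
    rw [show 2 * t + 1 + 1 = 2 * t + 2 by ring, oddProductCount_two_mul_add_two,
      oddProductCount_two_mul_add_one]
    simp only [Nat.even_iff]
    constructor <;> intro h hK <;> split_ifs at hK ⊢ <;> omega

theorem odd_binom_product_count_ne_one (a b n : ℕ) (h : 2 * (a + b) < n) :
    ((Finset.range (n + 1)).filter
        (fun i => Odd (Nat.choose i a * Nat.choose (n - i) b))).card ≠ 1 := fun hK =>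
  h.ne' ((oddProductCount_eq_one_imp n a b).1 h.le hK)
end

section
/- A binary word u of length n belongs to the V-set V({0,1}) if and only if n is a power of 2. -/
/-- `V` is the V-set `V({0,1})` of nonempty binary words: it contains the two
length-one words `0` and `1`, and a word of length at least `2` is in `V` iff it has
exactly one representation as an ordered concatenation of two (not necessarily
distinct) words of `V`. -/
def IsVFamily (V : Set (List Bool)) : Prop :=
  ∀ u : List Bool, u ∈ V ↔
    (u = [false] ∨ u = [true] ∨
      (2 ≤ u.length ∧ ∃! p : List Bool × List Bool,
        p.1 ∈ V ∧ p.2 ∈ V ∧ p.1 ++ p.2 = u))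

/-!
By strong induction on the length, membership in `V` depends only on the length. A
representation `u = v ++ w` is then determined by the split point `m = |v|`, and it is a
representation in `V` iff `m` and `|u| - m` are powers of two. If `|u| = 2 ^ a + 2 ^ b`
with `a ≠ b`, the two orders of the summands give two split points; and a power of two
`2 ^ (k + 1)` is a sum of two powers of two only as `2 ^ k + 2 ^ k`.
-/

theorem Nat.eq_of_two_pow_add_two_pow_eq_two_pow {a b k : ℕ} (h : 2 ^ a + 2 ^ b = 2 ^ k) :
    a = b := by
  wlog hab : a ≤ b generalizing a b
  · exact (this (by omega) (by omega)).symm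
  by_contra hne
  have := Nat.two_pow_pos a
  have hlt : 2 ^ a < 2 ^ b := Nat.pow_lt_pow_right one_lt_two (by omega)
  have hbk : b < k := (Nat.pow_lt_pow_iff_right one_lt_two).1 (by omega)
  have hkb : k < b + 1 := (Nat.pow_lt_pow_iff_right one_lt_two).1 (by rw [pow_succ]; omega)
  omega

theorem Nat.existsUnique_isPowerOfTwo_split_iff {n : ℕ} (hn : 2 ≤ n) :
    (∃! m, m ≤ n ∧ m.isPowerOfTwo ∧ (n - m).isPowerOfTwo) ↔ n.isPowerOfTwo := by
  constructor
  · rintro ⟨m, ⟨hm, ⟨a, ha⟩, ⟨b, hb⟩⟩, huniq⟩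
    have hba : 2 ^ b = 2 ^ a := ha ▸ huniq (2 ^ b) ⟨by omega, ⟨b, rfl⟩, ⟨a, by omega⟩⟩
    exact ⟨a + 1, by rw [pow_succ]; omega⟩
  · rintro ⟨k, rfl⟩
    obtain ⟨j, rfl⟩ : ∃ j, k = j + 1 := ⟨k - 1, by
      have : k ≠ 0 := by rintro rfl; simp at hn
      omega⟩
    have hsplit : 2 ^ (j + 1) - 2 ^ j = 2 ^ j := by rw [pow_succ]; omega
    refine ⟨2 ^ j, ⟨Nat.pow_le_pow_right two_pos j.le_succ, ⟨j, rfl⟩, ⟨j, hsplit⟩⟩,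
      ?_⟩
    rintro m ⟨hm, ⟨a, rfl⟩, ⟨b, hb⟩⟩
    have hab : a = b := Nat.eq_of_two_pow_add_two_pow_eq_two_pow (k := j + 1) (by omega)
    subst hab
    obtain rfl : a = j :=
      Nat.succ_injective (Nat.pow_right_injective le_rfl (by simp only [pow_succ]; omega))
    rfl

theorem List.existsUnique_append_eq_iff {α : Type*} (P R : List α → Prop) (u : List α) :
    (∃! p : List α × List α, P p.1 ∧ R p.2 ∧ p.1 ++ p.2 = u) ↔
      ∃! m, m ≤ u.length ∧ P (u.take m) ∧ R (u.drop m) := by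
  constructor
  · rintro ⟨⟨v, w⟩, ⟨hv, hw, rfl⟩, huniq⟩
    refine ⟨v.length, ⟨by simp, by simpa, by simpa⟩, ?_⟩
    rintro m ⟨hm, hPm, hRm⟩
    obtain ⟨htake, -⟩ := Prod.ext_iff.1 (huniq (_, _) ⟨hPm, hRm, List.take_append_drop m _⟩)
    rw [← List.length_take_of_le hm]
    exact congrArg List.length htake
  · rintro ⟨m, ⟨hm, hP, hR⟩, huniq⟩
    refine ⟨(u.take m, u.drop m), ⟨hP, hR, List.take_append_drop m u⟩, ?_⟩
    rintro ⟨v, w⟩ ⟨hv, hw, rfl⟩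
    obtain rfl : v.length = m := huniq v.length ⟨by simp, by simpa, by simpa⟩
    simp

theorem List.take_mem_and_drop_mem_iff {α : Type*} {S : Set (List α)} {u : List α}
    (hnil : [] ∉ S)
    (hshorter : ∀ w : List α, w.length < u.length → (w ∈ S ↔ w.length.isPowerOfTwo))
    {m : ℕ} (hm : m ≤ u.length) :
    u.take m ∈ S ∧ u.drop m ∈ S ↔ m.isPowerOfTwo ∧ (u.length - m).isPowerOfTwo := by
  rcases Nat.eq_zero_or_pos m with rfl | hm₀
  · simp [hnil, Nat.not_isPowerOfTwo_zero]
  rcases hm.lt_or_eq with hlt | rfl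
  · rw [hshorter _ (by simpa), hshorter _ (by simp; omega), List.length_take_of_le hm,
      List.length_drop]
  · simp [hnil, Nat.not_isPowerOfTwo_zero]

namespace IsVFamily

variable {V : Set (List Bool)} (hV : IsVFamily V)
include hV

theorem nil_notMem : [] ∉ V := by
  simp [hV []]

theorem mem_of_length_eq_one {u : List Bool} (hu : u.length = 1) : u ∈ V := by
  obtain ⟨b, rfl⟩ := List.length_eq_one_iff.1 hu
  cases b
  exacts [(hV _).2 (Or.inl rfl), (hV _).2 (Or.inr (Or.inl rfl))]

theorem mem_iff_existsUnique_append {u : List Bool} (hu : 2 ≤ u.length) :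
    u ∈ V ↔ ∃! p : List Bool × List Bool, p.1 ∈ V ∧ p.2 ∈ V ∧ p.1 ++ p.2 = u := by
  have h₀ : u ≠ [false] := by rintro rfl; simp at hu
  have h₁ : u ≠ [true] := by rintro rfl; simp at hu
  simp [hV u, h₀, h₁, hu]

theorem mem_iff_isPowerOfTwo_length (u : List Bool) : u ∈ V ↔ u.length.isPowerOfTwo := by
  have hshorter : ∀ w : List Bool, w.length < u.length → (w ∈ V ↔ w.length.isPowerOfTwo) :=
    fun w _ ↦ mem_iff_isPowerOfTwo_length w
  obtain hn | hn | hn : u.length = 0 ∨ u.length = 1 ∨ 2 ≤ u.length := by omega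
  · simp [List.length_eq_zero_iff.1 hn, hV.nil_notMem, Nat.not_isPowerOfTwo_zero]
  · exact iff_of_true (hV.mem_of_length_eq_one hn) ⟨0, hn⟩
  · rw [hV.mem_iff_existsUnique_append hn, List.existsUnique_append_eq_iff,
      ← Nat.existsUnique_isPowerOfTwo_split_iff hn]
    exact existsUnique_congr fun m ↦ and_congr_right fun hm ↦
      List.take_mem_and_drop_mem_iff hV.nil_notMem hshorter hm
termination_by u.length

end IsVFamily

theorem vset_free_group_general (V : Set (List Bool)) (hV : IsVFamily V)
    (u : List Bool) :
    u ∈ V ↔ ∃ k : ℕ, u.length = 2 ^ k :=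
  hV.mem_iff_isPowerOfTwo_length u

theorem vset_free_group (V : Set (List Bool)) (hV : IsVFamily V)
    (u : List Bool) (hu : u ≠ []) :
    u ∈ V ↔ ∃ k : ℕ, u.length = 2 ^ k :=
  vset_free_group_general V hV u
end

section
/- Suppose there exists a regular subset E of Z_{>0} × (Z/nZ) such that the sum of any two elements of E is never in E, and all but finitely many elements of the Ulam set U lie in E. Then U is regular. -/
/-- `U` is the Ulam set in `ℤ × ℤ/nℤ` generated by the finite initial set `S`, all of
whose elements have positive first coordinate: `U` contains `S`, every element of `U`
has positive first coordinate, and an element outside `S` belongs to `U` iff it has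
exactly one representation (up to order) as the sum of two distinct elements of `U`. -/
def IsUlamSet (n : ℕ) (S U : Set (ℤ × ZMod n)) : Prop :=
  S.Finite ∧ (∀ s ∈ S, 0 < s.1) ∧ (∀ u ∈ U, 0 < u.1) ∧ S ⊆ U ∧
    ∀ u : ℤ × ZMod n, u ∉ S →
      (u ∈ U ↔ ∃ a b : ℤ × ZMod n, a ∈ U ∧ b ∈ U ∧ a ≠ b ∧ a + b = u ∧
        ∀ c d : ℤ × ZMod n, c ∈ U → d ∈ U → c ≠ d → c + d = u →
          (c = a ∧ d = b) ∨ (c = b ∧ d = a))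

/-- A subset of `ℤ × ℤ/nℤ` is regular if it is eventually periodic in the first
coordinate: there is a period `P > 0` such that for all sufficiently large `x` and
every `y`, `(x, y)` is in the set iff `(x + P, y)` is. -/
def RegularSet (n : ℕ) (A : Set (ℤ × ZMod n)) : Prop :=
  ∃ P : ℤ, 0 < P ∧ ∃ X : ℤ, ∀ x : ℤ, X ≤ x → ∀ y : ZMod n,
    ((x, y) ∈ A ↔ (x + P, y) ∈ A)

theorem ulam_regular_of_E (n : ℕ) (hn : 0 < n) (S U E : Set (ℤ × ZMod n))
    (hU : IsUlamSet n S U)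
    (hEpos : ∀ e ∈ E, 0 < e.1)
    (hEreg : RegularSet n E)
    (hEsum : ∀ a ∈ E, ∀ b ∈ E, a + b ∉ E)
    (hfin : (U \ E).Finite) :
    RegularSet n U := by
  classical
  haveI : NeZero n := ⟨hn.ne'⟩
  obtain ⟨hSfin, hSpos, hUpos, hSU, hUlam⟩ := hU
  obtain ⟨P, hP, XE, hE⟩ := hEreg
  set F : Set (ℤ × ZMod n) := U \ E with hFdef
  -- bound on first coordinates of F ∪ S
  obtain ⟨M, hM1, hMbd⟩ : ∃ M : ℤ, 1 ≤ M ∧ ∀ v ∈ F ∪ S, v.1 ≤ M := by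
    obtain ⟨M0, hM0⟩ := ((hfin.union hSfin).image Prod.fst).bddAbove
    exact ⟨max M0 1, le_max_right _ _, fun v hv =>
      le_trans (hM0 ⟨v, hv, rfl⟩) (le_max_left _ _)⟩
  have hFbd : ∀ f ∈ F, 1 ≤ f.1 ∧ f.1 ≤ M := fun f hf =>
    ⟨hUpos f hf.1, hMbd f (Or.inl hf)⟩
  set X₀ : ℤ := max XE (2 * M + 1) with hX₀def
  have hX₀E : XE ≤ X₀ := le_max_left _ _
  have hX₀M : 2 * M + 1 ≤ X₀ := le_max_right _ _
  -- the key recurrence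
  have key : ∀ x : ℤ, X₀ ≤ x → ∀ y : ZMod n,
      ((x, y) ∈ U ↔ (x, y) ∈ E ∧ ∃! f, f ∈ F ∧ ((x, y) - f) ∈ U) := by
    intro x hx y
    have hx2 : 2 * M < x := by omega
    have hxS : (x, y) ∉ S := fun h => by have := hMbd _ (Or.inr h); simp at this; omega
    have hxF : (x, y) ∉ F := fun h => by have := hMbd _ (Or.inl h); simp at this; omega
    have hsubne : ∀ f ∈ F, f ≠ (x, y) - f := by
      intro f hf h
      have h1 := congrArg Prod.fst h
      have h2 := hFbd f hf
      simp [Prod.fst_sub] at h1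
      omega
    constructor
    · intro hxU
      have hxE : (x, y) ∈ E := by
        by_contra h; exact hxF ⟨hxU, h⟩
      refine ⟨hxE, ?_⟩
      obtain ⟨a, b, haU, hbU, hab, hsum, huniq⟩ := (hUlam _ hxS).mp hxU
      have hone : a ∈ F ∨ b ∈ F := by
        by_contra h
        push_neg at h
        have haE : a ∈ E := by by_contra h'; exact h.1 ⟨haU, h'⟩
        have hbE : b ∈ E := by by_contra h'; exact h.2 ⟨hbU, h'⟩
        exact hEsum a haE b hbE (hsum ▸ hxE)
      rcases hone with hA | hB
      · refine ⟨a, ⟨hA, ?_⟩, ?_⟩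
        · rw [← eq_sub_of_add_eq' hsum]; exact hbU
        · rintro f ⟨hfF, hfU⟩
          have hdist := hsubne f hfF
          have hsum' : f + ((x, y) - f) = (x, y) := by ring
          rcases huniq f _ hfF.1 hfU hdist hsum' with ⟨h1, _⟩ | ⟨h1, h2⟩
          · exact h1
          · exfalso
            have hbd := hFbd a hA
            have : ((x, y) - f).1 = x - f.1 := Prod.fst_sub _ _
            have hfbd := hFbd f hfF
            rw [h2] at this
            omega
      · refine ⟨b, ⟨hB, ?_⟩, ?_⟩
        · rw [← eq_sub_of_add_eq hsum]; exact haU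
        · rintro f ⟨hfF, hfU⟩
          have hdist := hsubne f hfF
          have hsum' : f + ((x, y) - f) = (x, y) := by ring
          rcases huniq f _ hfF.1 hfU hdist hsum' with ⟨h1, h2⟩ | ⟨h1, _⟩
          · exfalso
            have hbd := hFbd b hB
            have : ((x, y) - f).1 = x - f.1 := Prod.fst_sub _ _
            have hfbd := hFbd f hfF
            rw [h2] at this
            omega
          · exact h1
    · rintro ⟨hxE, f₀, ⟨hf₀F, hf₀U⟩, huf⟩
      refine (hUlam _ hxS).mpr ⟨f₀, (x, y) - f₀, hf₀F.1, hf₀U, hsubne f₀ hf₀F, by ring, ?_⟩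
      intro c d hcU hdU hcd hsum
      have hone : c ∈ F ∨ d ∈ F := by
        by_contra h
        push_neg at h
        have hcE : c ∈ E := by by_contra h'; exact h.1 ⟨hcU, h'⟩
        have hdE : d ∈ E := by by_contra h'; exact h.2 ⟨hdU, h'⟩
        exact hEsum c hcE d hdE (hsum ▸ hxE)
      rcases hone with hC | hD
      · left
        have hd : d = (x, y) - c := eq_sub_of_add_eq' hsum
        have hc : c = f₀ := huf c ⟨hC, by rw [← hd]; exact hdU⟩
        exact ⟨hc, by rw [hd, hc]⟩
      · right
        have hc : c = (x, y) - d := eq_sub_of_add_eq hsum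
        have hdf : d = f₀ := huf d ⟨hD, by rw [← hc]; exact hcU⟩
        exact ⟨by rw [hc, hdf], hdf⟩
  -- finite state machine setup
  set Mn : ℕ := M.toNat with hMndef
  have hMn : (Mn : ℤ) = M := by omega
  set Pn : ℕ := P.toNat with hPndef
  have hPn : (Pn : ℤ) = P := by omega
  haveI : NeZero Pn := ⟨by omega⟩
  set st : ℕ → (Set (Fin Mn × ZMod n)) × ZMod Pn :=
    fun k => ({ p | (X₀ + k - (p.1 : ℕ), p.2) ∈ U }, ((X₀ + k : ℤ) : ZMod Pn)) with hstdef
  obtain ⟨k, l, hkl, hst⟩ : ∃ k l : ℕ, k < l ∧ st k = st l := by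
    obtain ⟨k, l, hne, h⟩ := Finite.exists_ne_map_eq_of_infinite st
    rcases hne.lt_or_gt with h' | h'
    exacts [⟨k, l, h', h⟩, ⟨l, k, h', h.symm⟩]
  set Q : ℤ := (l : ℤ) - k with hQdef
  have hQpos : 0 < Q := by omega
  -- Q is a multiple of P
  have hPQ : P ∣ Q := by
    have h2 := congrArg Prod.snd hst
    simp only [st] at h2
    have := (ZMod.intCast_eq_intCast_iff _ _ _).mp h2
    have hd := Int.ModEq.dvd this
    rw [hPn] at hd
    have : (X₀ + (l : ℤ)) - (X₀ + k) = Q := by omega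
    rwa [this] at hd
  -- E is Q-periodic beyond XE
  have hEiter : ∀ j : ℕ, ∀ x : ℤ, XE ≤ x → ∀ y : ZMod n,
      ((x, y) ∈ E ↔ (x + j * P, y) ∈ E) := by
    intro j
    induction j with
    | zero => intro x hx y; simp
    | succ j ih =>
      intro x hx y
      rw [ih x hx y, show x + ((j + 1 : ℕ) : ℤ) * P = (x + j * P) + P by push_cast; ring]
      exact hE (x + j * P) (by nlinarith [Int.natCast_nonneg j]) y
  have hEQ : ∀ x : ℤ, XE ≤ x → ∀ y : ZMod n, ((x, y) ∈ E ↔ (x + Q, y) ∈ E) := by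
    obtain ⟨m, hm⟩ := hPQ
    have hm0 : 0 ≤ m := by nlinarith
    intro x hx y
    have := hEiter m.toNat x hx y
    rw [show ((m.toNat : ℤ)) * P = Q by rw [Int.toNat_of_nonneg hm0]; rw [hm]; ring] at this
    exact this
  -- the window predicate
  set W : ℤ → Prop := fun x => ∀ j : ℕ, j < Mn → ∀ y : ZMod n,
      ((x - j, y) ∈ U ↔ (x + Q - j, y) ∈ U) with hWdef
  -- determinism: the automaton step
  have step : ∀ x : ℤ, X₀ ≤ x → W x → W (x + 1) := by
    intro x hx hW j hj y
    match j with
    | (j' + 1) =>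
      have h1 : x + 1 - ((j' + 1 : ℕ) : ℤ) = x - j' := by push_cast; ring
      have h2 : x + 1 + Q - ((j' + 1 : ℕ) : ℤ) = x + Q - j' := by push_cast; ring
      rw [h1, h2]
      exact hW j' (by omega) y
    | 0 =>
      simp only [Nat.cast_zero, sub_zero]
      rw [key (x + 1) (by omega) y, key (x + 1 + Q) (by omega) y]
      have hEiff : ((x + 1, y) ∈ E ↔ (x + 1 + Q, y) ∈ E) := hEQ (x + 1) (by omega) y
      have hfs : ∀ f : ℤ × ZMod n, (f ∈ F ∧ ((x + 1, y) - f) ∈ U) ↔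
          (f ∈ F ∧ ((x + 1 + Q, y) - f) ∈ U) := by
        intro f
        constructor <;> rintro ⟨hfF, hfU⟩ <;> refine ⟨hfF, ?_⟩ <;>
        · have hbd := hFbd f hfF
          set j : ℕ := (f.1 - 1).toNat with hjdef
          have hjM : j < Mn := by omega
          have hjf : (j : ℤ) = f.1 - 1 := by omega
          have e1 : ((x + 1, y) - f) = ((x - (j : ℤ), y - f.2) : ℤ × ZMod n) := by
            rw [Prod.ext_iff]; constructor
            · rw [Prod.fst_sub]; simp; omega
            · rw [Prod.snd_sub]
          have e2 : ((x + 1 + Q, y) - f) = ((x + Q - (j : ℤ), y - f.2) : ℤ × ZMod n) := by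
            rw [Prod.ext_iff]; constructor
            · rw [Prod.fst_sub]; simp; omega
            · rw [Prod.snd_sub]
          have hWj := hW j hjM (y - f.2)
          first
          | (rw [e2]; rw [e1] at hfU; exact (hWj).mp hfU)
          | (rw [e1]; rw [e2] at hfU; exact (hWj).mpr hfU)
      constructor <;> rintro ⟨h1, h2⟩
      · exact ⟨hEiff.mp h1, (existsUnique_congr hfs).mp h2⟩
      · exact ⟨hEiff.mpr h1, (existsUnique_congr hfs).mpr h2⟩
  -- initial window equality from the repeated state
  have W0 : W (X₀ + k) := by
    intro j hj y
    have h1 := congrArg Prod.fst hst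
    simp only [st] at h1
    have := Set.ext_iff.mp h1 (⟨j, hj⟩, y)
    simp only [Set.mem_setOf_eq] at this
    have e : X₀ + (l : ℤ) - (j : ℤ) = X₀ + (k : ℤ) + Q - j := by omega
    rwa [e] at this
  -- propagate
  have main : ∀ t : ℕ, W (X₀ + k + t) := by
    intro t
    induction t with
    | zero => simpa using W0
    | succ t ih =>
      have := step (X₀ + k + t) (by omega) ih
      have e : X₀ + (k : ℤ) + ((t : ℕ) + 1 : ℕ) = X₀ + k + t + 1 := by push_cast; ring
      rwa [e]
  -- conclude
  refine ⟨Q, hQpos, X₀ + k, fun x hx y => ?_⟩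
  have hMnpos : 0 < Mn := by omega
  have := main (x - (X₀ + k)).toNat 0 hMnpos y
  have e : X₀ + (k : ℤ) + ((x - (X₀ + k)).toNat : ℤ) = x := by omega
  rw [e] at this
  simpa using this
end

section
/- If an Ulam set U in Z × (Z/nZ) is regular, then there exists a regular subset E of Z × (Z/nZ) such that the sum of two elements of E is never in E and only finitely many elements of U are not in E. -/
theorem ulam_E_of_regular (n : ℕ) (hn : 0 < n) (S U : Set (ℤ × ZMod n))
    (hU : IsUlamSet n S U) (hreg : RegularSet n U) :
    ∃ E : Set (ℤ × ZMod n), RegularSet n E ∧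
      (∀ a ∈ E, ∀ b ∈ E, a + b ∉ E) ∧ (U \ E).Finite := by
  haveI : NeZero n := ⟨hn.ne'⟩
  obtain ⟨hSfin, hSpos, hUpos, hSU, hulam⟩ := hU
  obtain ⟨P, hP, X, hX⟩ := hreg
  obtain ⟨B, hB⟩ : ∃ B : ℤ, ∀ s ∈ S, s.1 ≤ B := by
    obtain ⟨B, hB⟩ := (hSfin.image Prod.fst).bddAbove
    exact ⟨B, fun s hs => hB (Set.mem_image_of_mem _ hs)⟩
  set X₀ : ℤ := max (X + 4*P) (B + 1) with hX₀def
  have hX₀X : X + 4*P ≤ X₀ := le_max_left _ _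
  have hX₀B : B + 1 ≤ X₀ := le_max_right _ _
  have hX₀X' : X ≤ X₀ := by linarith
  have key : ∀ k : ℕ, ∀ x : ℤ, X ≤ x → ∀ y : ZMod n,
      ((x, y) ∈ U ↔ (x + k*P, y) ∈ U) := by
    intro k
    induction k with
    | zero => intro x hx y; simp
    | succ k ih =>
      intro x hx y
      have h1 := ih x hx y
      have h2 := hX (x + k*P) (by nlinarith [Nat.cast_nonneg (α := ℤ) k]) y
      have h3 : x + (k:ℤ)*P + P = x + ((k+1:ℕ):ℤ)*P := by push_cast; ring
      rw [h1, h2, h3]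
  have sumfree : ∀ a ∈ U, ∀ b ∈ U, X₀ ≤ a.1 → X₀ ≤ b.1 → a + b ∉ U := by
    intro a ha b hb ha1 hb1 hab
    have hXa : X + 4*P ≤ a.1 := le_trans hX₀X ha1
    have hXb : X + 4*P ≤ b.1 := le_trans hX₀X hb1
    have hfst : (a+b).1 = a.1 + b.1 := rfl
    have habS : a + b ∉ S := by
      intro h
      have h1 := hB _ h
      have h2 := hUpos a ha
      have h3 := hUpos b hb
      linarith
    obtain ⟨A₀, B₀, hA₀, hB₀, hAB₀, hsum₀, huniq⟩ := (hulam _ habS).mp hab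
    have hc : ∀ k : ℕ, (k:ℤ) ≤ 4 → (a.1 - k*P, a.2) ∈ U := by
      intro k hk
      have h := key k (a.1 - k*P) (by nlinarith) a.2
      have h2 : a.1 - (k:ℤ)*P + k*P = a.1 := by ring
      rw [h2] at h
      exact h.mpr (by rw [Prod.mk.eta]; exact ha)
    have hd : ∀ k : ℕ, (k:ℤ) ≤ 4 → (b.1 + k*P, b.2) ∈ U := by
      intro k hk
      have h := key k b.1 (by linarith) b.2
      exact h.mp (by rw [Prod.mk.eta]; exact hb)
    have huse : ∀ k : ℕ, (k:ℤ) ≤ 4 → a.1 - b.1 ≠ 2*(k:ℤ)*P →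
        ((a.1 - k*P, a.2) = A₀ ∨ (a.1 - k*P, a.2) = B₀) := by
      intro k hk hne
      have hcd : (a.1 - (k:ℤ)*P, a.2) ≠ (b.1 + (k:ℤ)*P, b.2) := by
        intro h
        have h' := congrArg Prod.fst h
        simp only [] at h'
        apply hne
        linarith
      have hsum : (a.1 - (k:ℤ)*P, a.2) + (b.1 + (k:ℤ)*P, b.2) = a + b := by
        have : a + b = (a.1 + b.1, a.2 + b.2) := rfl
        rw [this, Prod.mk_add_mk, Prod.mk.injEq]
        exact ⟨by ring, rfl⟩
      rcases huniq _ _ (hc k hk) (hd k hk) hcd hsum with ⟨h, _⟩ | ⟨h, _⟩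
      · exact Or.inl h
      · exact Or.inr h
    have pigeon : ∀ k1 k2 k3 : ℕ, (k1:ℤ) < k2 → (k2:ℤ) < k3 → (k3:ℤ) ≤ 4 →
        a.1 - b.1 ≠ 2*(k1:ℤ)*P → a.1 - b.1 ≠ 2*(k2:ℤ)*P → a.1 - b.1 ≠ 2*(k3:ℤ)*P →
        False := by
      intro k1 k2 k3 h12 h23 h34 e1 e2 e3
      have H1 := huse k1 (by linarith) e1
      have H2 := huse k2 (by linarith) e2
      have H3 := huse k3 (by linarith) e3
      have ne12 : (a.1 - (k1:ℤ)*P, a.2) ≠ (a.1 - (k2:ℤ)*P, a.2) := by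
        intro h
        have h' := congrArg Prod.fst h
        simp only [] at h'
        nlinarith
      have ne13 : (a.1 - (k1:ℤ)*P, a.2) ≠ (a.1 - (k3:ℤ)*P, a.2) := by
        intro h
        have h' := congrArg Prod.fst h
        simp only [] at h'
        nlinarith
      have ne23 : (a.1 - (k2:ℤ)*P, a.2) ≠ (a.1 - (k3:ℤ)*P, a.2) := by
        intro h
        have h' := congrArg Prod.fst h
        simp only [] at h'
        nlinarith
      rcases H1 with h1 | h1 <;> rcases H2 with h2 | h2 <;> rcases H3 with h3 | h3 <;>
        first
          | exact ne12 (h1.trans h2.symm)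
          | exact ne13 (h1.trans h3.symm)
          | exact ne23 (h2.trans h3.symm)
    rcases eq_or_ne (a.1 - b.1) (2*((1:ℕ):ℤ)*P) with e | e1
    · exact pigeon 2 3 4 (by norm_num) (by norm_num) (by norm_num)
        (by intro h; push_cast at e h; linarith)
        (by intro h; push_cast at e h; linarith)
        (by intro h; push_cast at e h; linarith)
    · rcases eq_or_ne (a.1 - b.1) (2*((2:ℕ):ℤ)*P) with e | e2
      · exact pigeon 1 3 4 (by norm_num) (by norm_num) (by norm_num) e1
          (by intro h; push_cast at e h; linarith)
          (by intro h; push_cast at e h; linarith)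
      · rcases eq_or_ne (a.1 - b.1) (2*((3:ℕ):ℤ)*P) with e | e3
        · exact pigeon 1 2 4 (by norm_num) (by norm_num) (by norm_num) e1 e2
            (by intro h; push_cast at e h; linarith)
        · exact pigeon 1 2 3 (by norm_num) (by norm_num) (by norm_num) e1 e2 e3
  refine ⟨{p : ℤ × ZMod n | X₀ ≤ p.1 ∧ p ∈ U}, ⟨P, hP, X₀, ?_⟩, ?_, ?_⟩
  · intro x hx y
    simp only [Set.mem_setOf_eq]
    constructor
    · rintro ⟨h1, h2⟩
      exact ⟨by linarith, (hX x (le_trans hX₀X' hx) y).mp h2⟩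
    · rintro ⟨h1, h2⟩
      exact ⟨hx, (hX x (le_trans hX₀X' hx) y).mpr h2⟩
  · rintro p ⟨hp1, hp2⟩ q ⟨hq1, hq2⟩ ⟨_, hpq⟩
    exact sumfree p hp2 q hq2 hp1 hq1 hpq
  · apply Set.Finite.subset ((Set.finite_Ioo (0:ℤ) X₀).prod (Set.finite_univ (α := ZMod n)))
    rintro p ⟨hpU, hpE⟩
    have hlt : p.1 < X₀ := lt_of_not_ge (fun h => hpE ⟨h, hpU⟩)
    exact ⟨⟨hUpos p hpU, hlt⟩, Set.mem_univ _⟩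
end

section
/- Let b > 3 and let (a_i) be the sequence in Z/2Z with a_i = 1 for 0 ≤ i ≤ b and satisfying the recurrence a_i = a_{i-1} + a_{i-b-1} for i > b. Write b = 2^e · c with c odd. Then for 0 ≤ q ≤ 2^e and 0 ≤ r < b+1 with (q,r) ≠ (0,0), one has a_{q(b+1)+r} ≡ C(r-1+q, q) (mod 2), where C denotes the binomial coefficient (with the convention C(m, q) = 0 when m < q). -/
/-!
Split the sequence into rows of length `b + 1`, so that `a (q * (b + 1) + r)` sits in row `q`,
column `r`. The recurrence says that each entry is the sum of its left neighbour and the entry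
directly above it, which is Pascal's rule for `C(r + q - 1, q)`. The only place where Pascal's
rule can break is the first column, whose entries come from the last column of the previous row:
`C(b + q - 1, q)` must be even there, and it is as long as `0 < q < 2 ^ e` because
`q * C(b + q - 1, q) = b * C(b + q - 1, q - 1)` and `2 ^ e ∣ b`.
-/

lemma two_dvd_choose_add_succ {b e k : ℕ} (hb : 2 ^ e ∣ b) (hk : k + 1 < 2 ^ e) :
    2 ∣ (b + k).choose (k + 1) := by
  by_contra hodd
  have hcop : Nat.Coprime (2 ^ e) ((b + k).choose (k + 1)) :=
    Nat.Coprime.pow_left _ ((Nat.Prime.coprime_iff_not_dvd Nat.prime_two).2 hodd)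
  have hdvd : 2 ^ e ∣ (b + k).choose (k + 1) * (k + 1) := by
    rw [Nat.choose_succ_right_eq, Nat.add_sub_cancel]
    exact dvd_mul_of_dvd_right hb _
  exact absurd (Nat.le_of_dvd k.succ_pos (hcop.dvd_of_dvd_mul_left hdvd)) (not_le.2 hk)

section Rows

variable {b : ℕ} {a : ℕ → ZMod 2}

lemma apply_succ_mul_add_zero (hrec : ∀ i : ℕ, a (i + b + 1) = a (i + b) + a i) (q : ℕ) :
    a ((q + 1) * (b + 1) + 0) = a (q * (b + 1) + b) + a (q * (b + 1) + 0) := by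
  rw [show (q + 1) * (b + 1) + 0 = q * (b + 1) + b + 1 by ring, hrec, add_zero]

lemma apply_succ_mul_add_succ (hrec : ∀ i : ℕ, a (i + b + 1) = a (i + b) + a i) (q r : ℕ) :
    a ((q + 1) * (b + 1) + (r + 1)) = a ((q + 1) * (b + 1) + r) + a (q * (b + 1) + (r + 1)) := by
  rw [show (q + 1) * (b + 1) + (r + 1) = q * (b + 1) + (r + 1) + b + 1 by ring, hrec,
    show q * (b + 1) + (r + 1) + b = (q + 1) * (b + 1) + r by ring]

/-- The formula also covers `q = r = 0`, since `0 - 1 = 0` in `ℕ`. -/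
theorem apply_mul_add_eq_choose {e : ℕ} (hrec : ∀ i : ℕ, a (i + b + 1) = a (i + b) + a i)
    (hinit : ∀ i ≤ b, a i = 1) (hb : 2 ^ e ∣ b) :
    ∀ q ≤ 2 ^ e, ∀ r ≤ b, a (q * (b + 1) + r) = ((r + q - 1).choose q : ZMod 2) := by
  intro q
  induction q with
  | zero =>
    intro _ r hr
    simp [hinit r hr]
  | succ q ih =>
    intro hq r hr
    have ih := ih (by omega)
    induction r with
    | zero =>
      rw [apply_succ_mul_add_zero hrec, ih b le_rfl, ih 0 (Nat.zero_le _)]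
      rcases q with _ | k
      · simp only [Nat.choose_zero_right, Nat.choose_succ_self, Nat.cast_one, Nat.cast_zero]
        decide
      · have heven := two_dvd_choose_add_succ hb (by omega : k + 1 < 2 ^ e)
        rw [Nat.add_succ_sub_one, (ZMod.natCast_eq_zero_iff _ 2).2 heven,
          Nat.choose_eq_zero_of_lt (by omega : 0 + (k + 1) - 1 < k + 1),
          Nat.choose_eq_zero_of_lt (by omega : 0 + (k + 1 + 1) - 1 < k + 1 + 1)]
        simp
    | succ r ihr =>
      rw [apply_succ_mul_add_succ hrec, ihr (by omega), ih (r + 1) hr,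
        show r + 1 + (q + 1) - 1 = (r + q) + 1 by omega, Nat.choose_succ_succ',
        show r + (q + 1) - 1 = r + q by omega, show r + 1 + q - 1 = r + q by omega]
      push_cast
      ring

end Rows

theorem ulam_binary_sequence_pascal_general (b e c : ℕ)
    (hbec : b = 2 ^ e * c)
    (a : ℕ → ZMod 2)
    (hinit : ∀ i ≤ b, a i = 1)
    (hrec : ∀ i : ℕ, a (i + b + 1) = a (i + b) + a i) :
    ∀ q r : ℕ, q ≤ 2 ^ e → r < b + 1 → ¬(q = 0 ∧ r = 0) →
      a (q * (b + 1) + r) = (Nat.choose (r + q - 1) q : ZMod 2) := by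
  intro q r hq hr _
  exact apply_mul_add_eq_choose hrec hinit (hbec ▸ dvd_mul_right _ _) q hq r (by omega)

theorem ulam_binary_sequence_pascal (b e c : ℕ) (hb : 3 < b)
    (hc : Odd c) (hbec : b = 2 ^ e * c)
    (a : ℕ → ZMod 2)
    (hinit : ∀ i ≤ b, a i = 1)
    (hrec : ∀ i : ℕ, a (i + b + 1) = a (i + b) + a i) :
    ∀ q r : ℕ, q ≤ 2 ^ e → r < b + 1 → ¬(q = 0 ∧ r = 0) →
      a (q * (b + 1) + r) = (Nat.choose (r + q - 1) q : ZMod 2) :=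
  ulam_binary_sequence_pascal_general b e c hbec a hinit hrec
end

section
/- Let b > 3 and let (a_i) be the sequence in Z/2Z with a_i = 1 for 0 ≤ i ≤ b and a_i = a_{i-1} + a_{i-b-1} for i > b. Then for every t ≥ b, at least one of a_t, a_{t-1}, ..., a_{t-b} equals 1; i.e., the sequence has no b+1 consecutive zeros. -/
theorem ulam_binary_sequence_no_long_gap (b : ℕ) (hb : 3 < b)
    (a : ℕ → ZMod 2)
    (hinit : ∀ i ≤ b, a i = 1)
    (hrec : ∀ i : ℕ, a (i + b + 1) = a (i + b) + a i) :
    ∀ t : ℕ, b ≤ t → ∃ i ≤ b, a (t - i) = 1 := by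
  intro t ht
  by_contra hcon
  push_neg at hcon
  have hzero : ∀ i ≤ b, a (t - i) = 0 := by
    intro i hi
    have h1 := hcon i hi
    have : ∀ x : ZMod 2, x ≠ 1 → x = 0 := by decide
    exact this _ h1
  have key : ∀ k, k ≤ t → a (t - k) = 0 := by
    intro k
    induction k using Nat.strong_induction_on with
    | _ k IH =>
      intro hk
      by_cases h : k ≤ b
      · exact hzero k h
      · push_neg at h
        have hk1 : b + 1 ≤ k := h
        have e1 : t - k + b + 1 = t - (k - b - 1) := by omega
        have e2 : t - k + b = t - (k - b) := by omega
        have hr := hrec (t - k)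
        rw [e1, e2] at hr
        have z1 : a (t - (k - b - 1)) = 0 := IH (k - b - 1) (by omega) (by omega)
        have z2 : a (t - (k - b)) = 0 := IH (k - b) (by omega) (by omega)
        rw [z1, z2] at hr
        have := hr.symm
        rwa [zero_add] at this
  have h0 : a (t - t) = 0 := key t le_rfl
  rw [Nat.sub_self] at h0
  have h1 : a 0 = 1 := hinit 0 (by omega)
  rw [h1] at h0
  exact one_ne_zero h0
end

section
/- Let U be the Ulam set with associated lattice generated by (-n,n) for n ≥ 2 (i.e., generated by v1, v2 with n·v1 = n·v2 and no smaller relation), and let U' be the image of the decomposition function α. If (x,y) ∈ U' and x ≡ y (mod n), then x = y. -/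
theorem ulam_alpha_congruent_eq (n : ℕ) (hn : 2 ≤ n)
    (v1 v2 : ℤ × ZMod n) (U : Set (ℤ × ZMod n))
    (hU : IsUlamSet n {v1, v2} U)
    (hlat : ∀ a b : ℤ, a • v1 + b • v2 = 0 ↔
      ∃ k : ℤ, a = -(n : ℤ) * k ∧ b = (n : ℤ) * k)
    (α : (ℤ × ZMod n) → ℕ × ℕ) (hα1 : α v1 = (1, 0)) (hα2 : α v2 = (0, 1))
    (hαrec : ∀ u ∈ U, u ≠ v1 → u ≠ v2 → ∃ u1 ∈ U, ∃ u2 ∈ U,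
      u1 ≠ u2 ∧ u1 + u2 = u ∧ α u = α u1 + α u2) :
    ∀ u ∈ U, (α u).1 ≡ (α u).2 [MOD n] → (α u).1 = (α u).2 := by
  obtain ⟨hSfin, hSpos, hUpos, hSU, hiff⟩ := hU
  have hv1U : v1 ∈ U := hSU (by simp)
  have hv2U : v2 ∈ U := hSU (by simp)
  have hp : 0 < v1.1 := hSpos v1 (by simp)
  have hp0 : v1.1 ≠ 0 := hp.ne'
  have hnZ : (2:ℤ) ≤ (n:ℤ) := by exact_mod_cast hn
  -- v1 ≠ v2
  have hne : v1 ≠ v2 := by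
    intro h
    have h0 : (1:ℤ) • v1 + (-1:ℤ) • v2 = 0 := by
      rw [h]; simp
    obtain ⟨k, hk1, hk2⟩ := (hlat 1 (-1)).mp h0
    have : (n:ℤ) * (-k) = 1 := by linarith
    have h1 : (n:ℤ) ∣ 1 := ⟨-k, this.symm⟩
    have := Int.le_of_dvd one_pos h1
    omega
  -- equal first coordinates
  have hfst : v2.1 = v1.1 := by
    have h0 : (-(n:ℤ)) • v1 + (n:ℤ) • v2 = 0 := (hlat _ _).mpr ⟨1, by ring, by ring⟩
    have h1 : (-(n:ℤ)) • v1.1 + (n:ℤ) • v2.1 = 0 := congrArg Prod.fst h0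
    simp only [smul_eq_mul] at h1
    have : (n:ℤ) * (v2.1 - v1.1) = 0 := by ring_nf; linarith
    rcases mul_eq_zero.mp this with h | h
    · omega
    · linarith
  set p := v1.1 with hpdef
  set s : ZMod n := v1.2 + v2.2 with hsdef
  set σ : ℤ × ZMod n → ℤ × ZMod n :=
    fun z => (z.1, ((z.1 / p : ℤ) : ZMod n) * s - z.2) with hσdef
  have hσσ : ∀ z, σ (σ z) = z := by
    intro z
    simp only [hσdef]
    exact Prod.ext rfl (by ring)
  have hσinj : Function.Injective σ := Function.LeftInverse.injective hσσ
  have hσv1 : σ v1 = v2 := by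
    have hdiv : v1.1 / p = 1 := Int.ediv_self hp0
    refine Prod.ext hfst.symm ?_
    simp only [hσdef, hdiv, hsdef]
    push_cast
    ring
  have hσv2 : σ v2 = v1 := by
    have hdiv : v2.1 / p = 1 := by rw [hfst]; exact Int.ediv_self hp0
    refine Prod.ext hfst ?_
    simp only [hσdef, hdiv, hsdef]
    push_cast
    ring
  have hσadd : ∀ a b : ℤ × ZMod n, p ∣ a.1 → p ∣ b.1 → σ (a + b) = σ a + σ b := by
    rintro a b ⟨ka, hka⟩ ⟨kb, hkb⟩
    have h1 : (a + b).1 = a.1 + b.1 := rfl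
    have hda : a.1 / p = ka := by rw [hka]; exact Int.mul_ediv_cancel_left _ hp0
    have hdb : b.1 / p = kb := by rw [hkb]; exact Int.mul_ediv_cancel_left _ hp0
    have hdab : (a.1 + b.1) / p = ka + kb := by
      rw [hka, hkb, ← mul_add]; exact Int.mul_ediv_cancel_left _ hp0
    refine Prod.ext rfl ?_
    simp only [hσdef, h1, hdab, hda, hdb, Prod.snd_add]
    push_cast
    ring
  -- main induction
  have key : ∀ N : ℕ, ∀ u ∈ U, u.1.toNat = N →
      σ u ∈ U ∧ α (σ u) = ((α u).2, (α u).1) ∧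
      u.1 = ((α u).1 + (α u).2 : ℤ) * p ∧
      u.2 = ((α u).1 : ZMod n) * v1.2 + ((α u).2 : ZMod n) * v2.2 := by
    intro N
    induction N using Nat.strong_induction_on with
    | _ N IH =>
    intro u huU huN
    by_cases h1 : u = v1
    · subst h1
      refine ⟨hσv1 ▸ hv2U, ?_, ?_, ?_⟩
      · rw [hσv1, hα1, hα2]
      · rw [hα1]; push_cast; ring
      · rw [hα1]; push_cast; ring
    by_cases h2 : u = v2
    · subst h2
      refine ⟨hσv2 ▸ hv1U, ?_, ?_, ?_⟩
      · rw [hσv2, hα1, hα2]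
      · rw [hα2, hfst]; push_cast; ring
      · rw [hα2]; push_cast; ring
    -- recursive case
    obtain ⟨u1, hu1U, u2, hu2U, hne12, hsum, hαsum⟩ := hαrec u huU h1 h2
    have hupos : 0 < u.1 := hUpos u huU
    have hu1pos : 0 < u1.1 := hUpos u1 hu1U
    have hu2pos : 0 < u2.1 := hUpos u2 hu2U
    have hfstsum : u1.1 + u2.1 = u.1 := congrArg Prod.fst hsum
    have hlt1 : u1.1.toNat < N := by omega
    have hlt2 : u2.1.toNat < N := by omega
    obtain ⟨hσ1U, hα1s, hrep1f, hrep1s⟩ := IH u1.1.toNat hlt1 u1 hu1U rfl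
    obtain ⟨hσ2U, hα2s, hrep2f, hrep2s⟩ := IH u2.1.toNat hlt2 u2 hu2U rfl
    have hdvd1 : p ∣ u1.1 := ⟨((α u1).1 + (α u1).2 : ℤ), by rw [hrep1f]; ring⟩
    have hdvd2 : p ∣ u2.1 := ⟨((α u2).1 + (α u2).2 : ℤ), by rw [hrep2f]; ring⟩
    have hσsum : σ u1 + σ u2 = σ u := by rw [← hsum, hσadd u1 u2 hdvd1 hdvd2]
    have hunotS : u ∉ ({v1, v2} : Set (ℤ × ZMod n)) := by simp [h1, h2]
    obtain ⟨a, b, haU, hbU, hab, habsum, habuniq⟩ := (hiff u hunotS).mp huU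
    -- uniqueness for u with respect to the pair (u1, u2)
    have huniq : ∀ c d, c ∈ U → d ∈ U → c ≠ d → c + d = u →
        (c = u1 ∧ d = u2) ∨ (c = u2 ∧ d = u1) := by
      intro c d hcU hdU hcd hcdsum
      rcases habuniq u1 u2 hu1U hu2U hne12 hsum with ⟨e1, e2⟩ | ⟨e1, e2⟩ <;>
        rcases habuniq c d hcU hdU hcd hcdsum with ⟨f1, f2⟩ | ⟨f1, f2⟩ <;>
        subst e1 <;> subst e2 <;> simp [f1, f2]
    have hσune1 : σ u ≠ v1 := by
      intro h
      have := congrArg σ h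
      rw [hσσ, hσv1] at this
      exact h2 this
    have hσune2 : σ u ≠ v2 := by
      intro h
      have := congrArg σ h
      rw [hσσ, hσv2] at this
      exact h1 this
    have hσunotS : σ u ∉ ({v1, v2} : Set (ℤ × ZMod n)) := by simp [hσune1, hσune2]
    -- the swapped uniqueness statement for σ u
    have hσuniq : ∀ c d, c ∈ U → d ∈ U → c ≠ d → c + d = σ u →
        (c = σ u1 ∧ d = σ u2) ∨ (c = σ u2 ∧ d = σ u1) := by
      intro c d hcU hdU hcd hcdsum
      have hcpos : 0 < c.1 := hUpos c hcU
      have hdpos : 0 < d.1 := hUpos d hdU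
      have hfcd : c.1 + d.1 = u.1 := by
        have := congrArg Prod.fst hcdsum
        simpa using this
      have hltc : c.1.toNat < N := by omega
      have hltd : d.1.toNat < N := by omega
      obtain ⟨hσcU, -, hrepcf, -⟩ := IH c.1.toNat hltc c hcU rfl
      obtain ⟨hσdU, -, hrepdf, -⟩ := IH d.1.toNat hltd d hdU rfl
      have hdvdc : p ∣ c.1 := ⟨((α c).1 + (α c).2 : ℤ), by rw [hrepcf]; ring⟩
      have hdvdd : p ∣ d.1 := ⟨((α d).1 + (α d).2 : ℤ), by rw [hrepdf]; ring⟩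
      have hσcd : σ c + σ d = u := by
        rw [← hσadd c d hdvdc hdvdd, hcdsum, hσσ]
      have hσcdne : σ c ≠ σ d := fun h => hcd (hσinj h)
      rcases huniq (σ c) (σ d) hσcU hσdU hσcdne hσcd with ⟨e1, e2⟩ | ⟨e1, e2⟩
      · left
        constructor
        · rw [← hσσ c, e1]
        · rw [← hσσ d, e2]
      · right
        constructor
        · rw [← hσσ c, e1]
        · rw [← hσσ d, e2]
    have hσuU : σ u ∈ U := by
      rw [hiff (σ u) hσunotS]
      exact ⟨σ u1, σ u2, hσ1U, hσ2U, fun h => hne12 (hσinj h), hσsum, hσuniq⟩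
    refine ⟨hσuU, ?_, ?_, ?_⟩
    · -- α (σ u) = swap (α u)
      obtain ⟨w1, hw1U, w2, hw2U, hw12, hwsum, hαw⟩ := hαrec (σ u) hσuU hσune1 hσune2
      have : α w1 + α w2 = α (σ u1) + α (σ u2) := by
        rcases hσuniq w1 w2 hw1U hw2U hw12 hwsum with ⟨e1, e2⟩ | ⟨e1, e2⟩
        · rw [e1, e2]
        · rw [e1, e2, add_comm]
      rw [hαw, this, hα1s, hα2s, hαsum]
      exact Prod.ext rfl rfl
    · -- first coordinate formula
      have : (α u).1 = (α u1).1 + (α u2).1 := by rw [hαsum]; rfl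
      have h2' : (α u).2 = (α u1).2 + (α u2).2 := by rw [hαsum]; rfl
      rw [this, h2', ← hfstsum, hrep1f, hrep2f]
      push_cast
      ring
    · -- second coordinate formula
      have h1' : (α u).1 = (α u1).1 + (α u2).1 := by rw [hαsum]; rfl
      have h2' : (α u).2 = (α u1).2 + (α u2).2 := by rw [hαsum]; rfl
      have hsndsum : u1.2 + u2.2 = u.2 := congrArg Prod.snd hsum
      rw [h1', h2', ← hsndsum, hrep1s, hrep2s]
      push_cast
      ring
  -- conclusion
  intro u huU hmod
  obtain ⟨hσuU, hswap, hrepf, hreps⟩ := key u.1.toNat u huU rfl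
  have hcast : ((α u).1 : ZMod n) = ((α u).2 : ZMod n) :=
    (ZMod.natCast_eq_natCast_iff _ _ _).mpr hmod
  have hdiv : u.1 / p = ((α u).1 + (α u).2 : ℤ) := by
    rw [hrepf]; exact Int.mul_ediv_cancel _ hp0
  have hfix : σ u = u := by
    refine Prod.ext rfl ?_
    simp only [hσdef, hdiv, hsdef, hreps]
    push_cast
    rw [hcast]
    ring
  rw [hfix] at hswap
  have := congrArg Prod.fst hswap
  simpa using this
end
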